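/- arXiv:2505.06981 — 5 statements merged into one kernel-verified Lean document; each statement's English description precedes it below -/
import Mathlib

section
/- (Corollary: idle logical qubits are protected against Z errors during code surgery.) Assume the CSS code, the code-surgery datum, and that the pair (H_G, H_M) is (d_R, S)-bounded for a positive integer d_R. Let δ be a positive integer with d_R ≥ δ, and fix j ∈ {1, …, k−q}. Suppose every ψ⋆ ∈ F₂^{k−q} whose j-th entry equals 1 satisfies d(H_X, α_⊥ J_X, ψ⋆) ≥ δ. Then every e with H^{st}_X eᵀ = 0 whose induced logical action flips the j-th unmeasured X logical operator, i.e., (J^{st}_X eᵀ)_j = 1, satisfies |e| ≥ δ. -/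
open Matrix

/-- Error-wise distance `d(H, J, ψ) ∈ ℕ∞`: the infimum of the Hamming weight `|e|` over all
row vectors `e` with `H eᵀ = 0` and `J eᵀ = ψᵀ`; `⊤` if no such `e` exists. -/
noncomputable def ewDist {χ κ μ : Type*} [Fintype κ]
    (H : Matrix χ κ (ZMod 2)) (J : Matrix μ κ (ZMod 2)) (ψ : μ → ZMod 2) : ℕ∞ :=
  sInf {w : ℕ∞ | ∃ e : κ → ZMod 2, H.mulVec e = 0 ∧ J.mulVec e = ψ ∧ w = (hammingNorm e : ℕ∞)}

/-- The pair `(H_G, H_M)` is `(d_R, S)`-bounded. -/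
def BoundedPair {n rG rM nG : ℕ} (HG : Matrix (Fin rG) (Fin nG) (ZMod 2))
    (HM : Matrix (Fin rM) (Fin rG) (ZMod 2)) (S : Matrix (Fin nG) (Fin n) (ZMod 2))
    (dR : ℕ) : Prop :=
  ∀ v : Fin rG → ZMod 2, HM.mulVec v = 0 → hammingNorm v < dR →
    ∃ u : Fin nG → ZMod 2, v = HG.mulVec u ∧
      hammingNorm (Matrix.vecMul u S) ≤ hammingNorm v

/-- Deformed-code X check matrix `H̄_X = [[H_X, T],[0, H_M]]`. -/
def HbarX {n rX rG rM : ℕ} (HX : Matrix (Fin rX) (Fin n) (ZMod 2))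
    (T : Matrix (Fin rX) (Fin rG) (ZMod 2)) (HM : Matrix (Fin rM) (Fin rG) (ZMod 2)) :
    Matrix (Fin rX ⊕ Fin rM) (Fin n ⊕ Fin rG) (ZMod 2) :=
  Matrix.fromBlocks HX T 0 HM

/-- Deformed-code Z check matrix `H̄_Z = [[H_Z, 0],[S, H_Gᵀ]]`. -/
def HbarZ {n rZ rG nG : ℕ} (HZ : Matrix (Fin rZ) (Fin n) (ZMod 2))
    (S : Matrix (Fin nG) (Fin n) (ZMod 2)) (HG : Matrix (Fin rG) (Fin nG) (ZMod 2)) :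
    Matrix (Fin rZ ⊕ Fin nG) (Fin n ⊕ Fin rG) (ZMod 2) :=
  Matrix.fromBlocks HZ 0 S HGᵀ

/-- Deformed-code X generator matrix `J̄_X = (α_⊥ J_X  β)`. -/
def JbarX {n k q rG : ℕ} (JX : Matrix (Fin k) (Fin n) (ZMod 2))
    (αperp : Matrix (Fin (k - q)) (Fin k) (ZMod 2))
    (β : Matrix (Fin (k - q)) (Fin rG) (ZMod 2)) :
    Matrix (Fin (k - q)) (Fin n ⊕ Fin rG) (ZMod 2) :=
  Matrix.fromCols (αperp * JX) β

/-- Deformed-code Z generator matrix `J̄_Z = ((α_⊥ʳ)ᵀ J_Z  0)`. -/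
def JbarZ {n k q rG : ℕ} (JZ : Matrix (Fin k) (Fin n) (ZMod 2))
    (αperpR : Matrix (Fin k) (Fin (k - q)) (ZMod 2)) :
    Matrix (Fin (k - q)) (Fin n ⊕ Fin rG) (ZMod 2) :=
  Matrix.fromCols (αperpRᵀ * JZ) (0 : Matrix (Fin (k - q)) (Fin rG) (ZMod 2))

/-- Repetition-code check matrix `H_m ∈ F₂^{(m−1)×m}`, `(H_m)_{i,j} = 1` iff `j ∈ {i, i+1}`
(1-based); in 0-based indexing: `j = i` or `j = i+1`. -/
def repH (m : ℕ) : Matrix (Fin (m - 1)) (Fin m) (ZMod 2) :=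
  Matrix.of fun i j => if (j : ℕ) = (i : ℕ) ∨ (j : ℕ) = (i : ℕ) + 1 then 1 else 0

/-- The matrix `(E_p  0) ∈ F₂^{p×m}` selecting the first `p` coordinates. -/
def projFirst (p m : ℕ) : Matrix (Fin p) (Fin m) (ZMod 2) :=
  Matrix.of fun i j => if (j : ℕ) = (i : ℕ) then 1 else 0

/-- Hamming weight of a matrix (number of nonzero entries). -/
def matWeight {ι κ : Type*} [Fintype ι] [Fintype κ] (M : Matrix ι κ (ZMod 2)) : ℕ :=
  hammingNorm (Function.uncurry M)

/-- Spacetime X check matrix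
`H^{st}_X = [[H̄_X, 0, 0, E_{d_T;1}⊗E], [0, E_{d_T−1}⊗H̄_X, 0, H_{d_T}⊗E], [0, 0, H̄_X, E_{d_T;d_T}⊗E]]`,
built from the deformed check matrix `H̄_X` (here `E = E_{r_X+r_M}`).  Rounds are 0-based:
round index `s : Fin d_T`, with `s = 0` the first round and `s = d_T − 1` the last. -/
def HstX {n rX rG rM : ℕ} (dT : ℕ)
    (HbX : Matrix (Fin rX ⊕ Fin rM) (Fin n ⊕ Fin rG) (ZMod 2)) :
    Matrix ((Fin rX ⊕ Fin rM) ⊕ (Fin (dT - 1) × (Fin rX ⊕ Fin rM)) ⊕ (Fin rX ⊕ Fin rM))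
      ((Fin n ⊕ Fin rG) ⊕ (Fin (dT - 1) × (Fin n ⊕ Fin rG)) ⊕ (Fin n ⊕ Fin rG) ⊕
        (Fin dT × (Fin rX ⊕ Fin rM))) (ZMod 2) :=
  Matrix.of fun i j =>
    match i, j with
    | Sum.inl c, Sum.inl qq => HbX c qq
    | Sum.inl c, Sum.inr (Sum.inr (Sum.inr (s, c'))) =>
        if (s : ℕ) = 0 ∧ c' = c then 1 else 0
    | Sum.inr (Sum.inl (t, c)), Sum.inr (Sum.inl (t', qq)) =>
        if t' = t then HbX c qq else 0
    | Sum.inr (Sum.inl (t, c)), Sum.inr (Sum.inr (Sum.inr (s, c'))) =>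
        if ((s : ℕ) = (t : ℕ) ∨ (s : ℕ) = (t : ℕ) + 1) ∧ c' = c then 1 else 0
    | Sum.inr (Sum.inr c), Sum.inr (Sum.inr (Sum.inl qq)) => HbX c qq
    | Sum.inr (Sum.inr c), Sum.inr (Sum.inr (Sum.inr (s, c'))) =>
        if (s : ℕ) = dT - 1 ∧ c' = c then 1 else 0
    | _, _ => 0

/-- Spacetime Z check matrix
`H^{st}_Z = [[H_Z, 0, 0, E_{d_T;1}⊗γ₁], [0, E_{d_T−1}⊗H̄_Z, 0, H_{d_T}⊗E], [0, 0, H_Z, E_{d_T;d_T}⊗γ₁]]`,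
built from `H_Z` and the deformed check matrix `H̄_Z` (here `E = E_{r_Z+n_G}` and
`γ₁ = (E_{r_Z}  0)`). -/
def HstZ {n rZ rG nG : ℕ} (dT : ℕ) (HZ : Matrix (Fin rZ) (Fin n) (ZMod 2))
    (HbZ : Matrix (Fin rZ ⊕ Fin nG) (Fin n ⊕ Fin rG) (ZMod 2)) :
    Matrix (Fin rZ ⊕ (Fin (dT - 1) × (Fin rZ ⊕ Fin nG)) ⊕ Fin rZ)
      (Fin n ⊕ (Fin (dT - 1) × (Fin n ⊕ Fin rG)) ⊕ Fin n ⊕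
        (Fin dT × (Fin rZ ⊕ Fin nG))) (ZMod 2) :=
  Matrix.of fun i j =>
    match i, j with
    | Sum.inl z, Sum.inl a => HZ z a
    | Sum.inl z, Sum.inr (Sum.inr (Sum.inr (s, w))) =>
        if (s : ℕ) = 0 ∧ w = Sum.inl z then 1 else 0
    | Sum.inr (Sum.inl (t, w)), Sum.inr (Sum.inl (t', qq)) =>
        if t' = t then HbZ w qq else 0
    | Sum.inr (Sum.inl (t, w)), Sum.inr (Sum.inr (Sum.inr (s, w'))) =>
        if ((s : ℕ) = (t : ℕ) ∨ (s : ℕ) = (t : ℕ) + 1) ∧ w' = w then 1 else 0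
    | Sum.inr (Sum.inr z), Sum.inr (Sum.inr (Sum.inl a)) => HZ z a
    | Sum.inr (Sum.inr z), Sum.inr (Sum.inr (Sum.inr (s, w))) =>
        if (s : ℕ) = dT - 1 ∧ w = Sum.inl z then 1 else 0
    | _, _ => 0

/-- Spacetime X generator matrix `J^{st}_X = (J̄_X, 1_{d_T−1}⊗J̄_X, J̄_X, 0)`. -/
def JstX {n k q rX rG rM : ℕ} (dT : ℕ)
    (JbX : Matrix (Fin (k - q)) (Fin n ⊕ Fin rG) (ZMod 2)) :
    Matrix (Fin (k - q))
      ((Fin n ⊕ Fin rG) ⊕ (Fin (dT - 1) × (Fin n ⊕ Fin rG)) ⊕ (Fin n ⊕ Fin rG) ⊕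
        (Fin dT × (Fin rX ⊕ Fin rM))) (ZMod 2) :=
  Matrix.of fun i j =>
    match j with
    | Sum.inl qq => JbX i qq
    | Sum.inr (Sum.inl (_, qq)) => JbX i qq
    | Sum.inr (Sum.inr (Sum.inl qq)) => JbX i qq
    | Sum.inr (Sum.inr (Sum.inr _)) => 0

/-- Spacetime Z generator matrix `J^{st}_Z = ((α_⊥ʳ)ᵀJ_Z, 1_{d_T−1}⊗J̄_Z, (α_⊥ʳ)ᵀJ_Z, 0)`,
given `JZ' = (α_⊥ʳ)ᵀ J_Z` and `J̄_Z`. -/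
def JstZ {n k q rZ rG nG : ℕ} (dT : ℕ)
    (JZ' : Matrix (Fin (k - q)) (Fin n) (ZMod 2))
    (JbZ : Matrix (Fin (k - q)) (Fin n ⊕ Fin rG) (ZMod 2)) :
    Matrix (Fin (k - q))
      (Fin n ⊕ (Fin (dT - 1) × (Fin n ⊕ Fin rG)) ⊕ Fin n ⊕
        (Fin dT × (Fin rZ ⊕ Fin nG))) (ZMod 2) :=
  Matrix.of fun i j =>
    match j with
    | Sum.inl a => JZ' i a
    | Sum.inr (Sum.inl (_, qq)) => JbZ i qq
    | Sum.inr (Sum.inr (Sum.inl a)) => JZ' i a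
    | Sum.inr (Sum.inr (Sum.inr _)) => 0

/-- Spacetime generator matrix for measured Z logical operators
`J^{st}_{mz} = (αJ_Z, 1_{d_T−1}⊗(αJ_Z η), αJ_Z, 0)`, given `M = α J_Z`
(note `α J_Z η = (α J_Z  0)`). -/
def JstMZ {n q rZ rG nG : ℕ} (dT : ℕ) (M : Matrix (Fin q) (Fin n) (ZMod 2)) :
    Matrix (Fin q)
      (Fin n ⊕ (Fin (dT - 1) × (Fin n ⊕ Fin rG)) ⊕ Fin n ⊕
        (Fin dT × (Fin rZ ⊕ Fin nG))) (ZMod 2) :=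
  Matrix.of fun i j =>
    match j with
    | Sum.inl a => M i a
    | Sum.inr (Sum.inl (_, Sum.inl a)) => M i a
    | Sum.inr (Sum.inl (_, Sum.inr _)) => 0
    | Sum.inr (Sum.inr (Sum.inl a)) => M i a
    | Sum.inr (Sum.inr (Sum.inr _)) => 0

/-- Spacetime generator matrix for measurement outcomes
`J^{st}_{oc} = (αJ_Z, 0, 0, E_{d_T;1}⊗(αJ_Z R γ₂))`, given `M = α J_Z` and `N = α J_Z R`
(note `α J_Z R γ₂ = (0  α J_Z R)`). -/
def JstOC {n q rZ rG nG : ℕ} (dT : ℕ) (M : Matrix (Fin q) (Fin n) (ZMod 2))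
    (N : Matrix (Fin q) (Fin nG) (ZMod 2)) :
    Matrix (Fin q)
      (Fin n ⊕ (Fin (dT - 1) × (Fin n ⊕ Fin rG)) ⊕ Fin n ⊕
        (Fin dT × (Fin rZ ⊕ Fin nG))) (ZMod 2) :=
  Matrix.of fun i j =>
    match j with
    | Sum.inl a => M i a
    | Sum.inr (Sum.inl _) => 0
    | Sum.inr (Sum.inr (Sum.inl _)) => 0
    | Sum.inr (Sum.inr (Sum.inr (_, Sum.inl _))) => 0
    | Sum.inr (Sum.inr (Sum.inr (s, Sum.inr g))) => if (s : ℕ) = 0 then N i g else 0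


section Aux

lemma stp_hn_add_le {ι : Type*} [Fintype ι] (x y : ι → ZMod 2) :
    hammingNorm (x + y) ≤ hammingNorm x + hammingNorm y := by
  have h1 : hammingNorm (x + y) = hammingDist (x + y) 0 := (hammingDist_zero_right _).symm
  have h2 := hammingDist_triangle (x + y) y 0
  simp only [hammingDist_zero_right] at h2
  have h3 : hammingDist (x + y) y = hammingNorm x := by
    rw [hammingDist_eq_hammingNorm]; congr 1; ring_nf; funext i; exact ZMod.neg_eq_self_mod_two _
  omega

lemma stp_hn_finsum_le {ι κ : Type*} [Fintype ι] (s : Finset κ) (g : κ → ι → ZMod 2) :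
    hammingNorm (∑ t ∈ s, g t) ≤ ∑ t ∈ s, hammingNorm (g t) := by
  classical
  induction s using Finset.induction with
  | empty => simp
  | insert a s hx ih =>
    rw [Finset.sum_insert hx, Finset.sum_insert hx]
    exact le_trans (stp_hn_add_le _ _) (by omega)

lemma stp_hn_sumtype {ι κ : Type*} [Fintype ι] [Fintype κ] (g : ι ⊕ κ → ZMod 2) :
    hammingNorm g = hammingNorm (g ∘ Sum.inl) + hammingNorm (g ∘ Sum.inr) := by
  classical
  simp only [hammingNorm, Finset.card_filter]
  rw [Fintype.sum_sum_type]; rfl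

lemma stp_hn_prod {ι κ : Type*} [Fintype ι] [Fintype κ] (g : ι × κ → ZMod 2) :
    hammingNorm g = ∑ t, hammingNorm (fun q => g (t, q)) := by
  classical
  simp only [hammingNorm, Finset.card_filter]
  rw [Fintype.sum_prod_type]

lemma stp_deformed_bound {n k q rX rG rM nG : ℕ}
    (HX : Matrix (Fin rX) (Fin n) (ZMod 2)) (JX : Matrix (Fin k) (Fin n) (ZMod 2))
    (αperp : Matrix (Fin (k - q)) (Fin k) (ZMod 2))
    (S : Matrix (Fin nG) (Fin n) (ZMod 2)) (T : Matrix (Fin rX) (Fin rG) (ZMod 2))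
    (HG : Matrix (Fin rG) (Fin nG) (ZMod 2)) (HM : Matrix (Fin rM) (Fin rG) (ZMod 2))
    (β : Matrix (Fin (k - q)) (Fin rG) (ZMod 2))
    (hs1 : HX * Sᵀ = T * HG) (hs4 : αperp * JX * Sᵀ = β * HG)
    (dR : ℕ) (hbound : BoundedPair HG HM S dR)
    (δ : ℕ) (hδdR : δ ≤ dR) (j : Fin (k - q))
    (hdist : ∀ ψstar : Fin (k - q) → ZMod 2, ψstar j = 1 →
      (δ : ℕ∞) ≤ ewDist HX (αperp * JX) ψstar)
    (f : Fin n ⊕ Fin rG → ZMod 2)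
    (hchk : (HbarX HX T HM).mulVec f = 0)
    (hlog : (JbarX JX αperp β).mulVec f j = 1) :
    δ ≤ hammingNorm f := by
  by_contra hlt
  push_neg at hlt
  set x := f ∘ Sum.inl with hx
  set v := f ∘ Sum.inr with hvdef
  have hf : f = Sum.elim x v := by ext i; cases i <;> rfl
  rw [hf, HbarX, Matrix.fromBlocks_mulVec] at hchk
  have h1 : HX *ᵥ x + T *ᵥ v = 0 := by
    funext i; have := congrFun hchk (Sum.inl i); simpa using this
  have h2 : HM *ᵥ v = 0 := by
    funext i; have := congrFun hchk (Sum.inr i); simpa using this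
  rw [hf, JbarX, Matrix.fromCols_mulVec_sumElim] at hlog
  have hsplit : hammingNorm f = hammingNorm x + hammingNorm v := stp_hn_sumtype f
  have hvlt : hammingNorm v < dR := by omega
  obtain ⟨u, huv, huS⟩ := hbound v h2 hvlt
  set e' : Fin n → ZMod 2 := x + u ᵥ* S with he'
  have hSu : ∀ {m : ℕ} (A : Matrix (Fin m) (Fin n) (ZMod 2)), A *ᵥ (u ᵥ* S) = (A * Sᵀ) *ᵥ u :=
    fun A => Matrix.mulVec_vecMul A S u
  have hHXe : HX *ᵥ e' = 0 := by
    rw [he', Matrix.mulVec_add, hSu, hs1]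
    rw [show (T * HG) *ᵥ u = T *ᵥ v from by rw [← Matrix.mulVec_mulVec, ← huv]]
    exact h1
  have hψ : (αperp * JX) *ᵥ e' = (αperp * JX) *ᵥ x + β *ᵥ v := by
    rw [he', Matrix.mulVec_add, hSu, hs4]
    rw [show (β * HG) *ᵥ u = β *ᵥ v from by rw [← Matrix.mulVec_mulVec, ← huv]]
  have hψj : ((αperp * JX) *ᵥ e') j = 1 := by rw [hψ]; exact hlog
  have hle : ewDist HX (αperp * JX) ((αperp * JX) *ᵥ e') ≤ (hammingNorm e' : ℕ∞) :=
    sInf_le ⟨e', hHXe, rfl, rfl⟩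
  have hlo := hdist _ hψj
  have hne : hammingNorm e' < δ := by
    have := stp_hn_add_le x (u ᵥ* S)
    rw [← he'] at this
    omega
  have : (δ : ℕ∞) ≤ (hammingNorm e' : ℕ∞) := le_trans hlo hle
  rw [Nat.cast_le] at this
  omega

variable {n rX rG rM : ℕ}

lemma stp_row1 (dT : ℕ) (HbX : Matrix (Fin rX ⊕ Fin rM) (Fin n ⊕ Fin rG) (ZMod 2))
    (e : ((Fin n ⊕ Fin rG) ⊕ (Fin (dT - 1) × (Fin n ⊕ Fin rG)) ⊕ (Fin n ⊕ Fin rG) ⊕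
        (Fin dT × (Fin rX ⊕ Fin rM))) → ZMod 2) (c : Fin rX ⊕ Fin rM) :
    (HstX dT HbX).mulVec e (Sum.inl c)
      = (∑ qq, HbX c qq * e (Sum.inl qq))
        + ∑ s : Fin dT, (if (s : ℕ) = 0 then e (Sum.inr (Sum.inr (Sum.inr (s, c)))) else 0) := by
  simp only [Matrix.mulVec, dotProduct, Fintype.sum_sum_type, Fintype.sum_prod_type, HstX,
    Matrix.of_apply, zero_mul, Finset.sum_const_zero, add_zero, zero_add, ite_mul, one_mul]
  congr 1
  refine Finset.sum_congr rfl fun s _ => ?_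
  rcases c with c|c <;> by_cases h0 : (s : ℕ) = 0 <;>
    simp [h0, Finset.sum_ite_eq', Sum.inl.injEq, Sum.inr.injEq]

lemma stp_row2 (dT : ℕ) (HbX : Matrix (Fin rX ⊕ Fin rM) (Fin n ⊕ Fin rG) (ZMod 2))
    (e : ((Fin n ⊕ Fin rG) ⊕ (Fin (dT - 1) × (Fin n ⊕ Fin rG)) ⊕ (Fin n ⊕ Fin rG) ⊕
        (Fin dT × (Fin rX ⊕ Fin rM))) → ZMod 2)
    (t : Fin (dT - 1)) (c : Fin rX ⊕ Fin rM) :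
    (HstX dT HbX).mulVec e (Sum.inr (Sum.inl (t, c)))
      = (∑ qq, HbX c qq * e (Sum.inr (Sum.inl (t, qq))))
        + ∑ s : Fin dT, (if ((s : ℕ) = (t : ℕ) ∨ (s : ℕ) = (t : ℕ) + 1)
            then e (Sum.inr (Sum.inr (Sum.inr (s, c)))) else 0) := by
  simp only [Matrix.mulVec, dotProduct, Fintype.sum_sum_type, Fintype.sum_prod_type, HstX,
    Matrix.of_apply, zero_mul, Finset.sum_const_zero, add_zero, zero_add, ite_mul, one_mul]
  congr 1
  · rw [Finset.sum_congr rfl (fun x (_ : x ∈ Finset.univ) => show _ = if x = t then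
        ((∑ a₁ : Fin n, HbX c (Sum.inl a₁) * e (Sum.inr (Sum.inl (x, Sum.inl a₁)))) +
         ∑ a₂ : Fin rG, HbX c (Sum.inr a₂) * e (Sum.inr (Sum.inl (x, Sum.inr a₂)))) else 0
      from by split <;> simp_all)]
    rw [Finset.sum_ite_eq' Finset.univ t]
    simp
  · refine Finset.sum_congr rfl fun s _ => ?_
    rcases c with c|c <;> by_cases h0 : ((s : ℕ) = (t : ℕ) ∨ (s : ℕ) = (t : ℕ) + 1) <;>
      simp [h0, Finset.sum_ite_eq', Sum.inl.injEq, Sum.inr.injEq]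

lemma stp_row3 (dT : ℕ) (HbX : Matrix (Fin rX ⊕ Fin rM) (Fin n ⊕ Fin rG) (ZMod 2))
    (e : ((Fin n ⊕ Fin rG) ⊕ (Fin (dT - 1) × (Fin n ⊕ Fin rG)) ⊕ (Fin n ⊕ Fin rG) ⊕
        (Fin dT × (Fin rX ⊕ Fin rM))) → ZMod 2) (c : Fin rX ⊕ Fin rM) :
    (HstX dT HbX).mulVec e (Sum.inr (Sum.inr c))
      = (∑ qq, HbX c qq * e (Sum.inr (Sum.inr (Sum.inl qq))))
        + ∑ s : Fin dT, (if (s : ℕ) = dT - 1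
            then e (Sum.inr (Sum.inr (Sum.inr (s, c)))) else 0) := by
  simp only [Matrix.mulVec, dotProduct, Fintype.sum_sum_type, Fintype.sum_prod_type, HstX,
    Matrix.of_apply, zero_mul, Finset.sum_const_zero, add_zero, zero_add, ite_mul, one_mul]
  congr 1
  refine Finset.sum_congr rfl fun s _ => ?_
  rcases c with c|c <;> by_cases h0 : (s : ℕ) = dT - 1 <;>
    simp [h0, Finset.sum_ite_eq', Sum.inl.injEq, Sum.inr.injEq]

lemma stp_rowJ {k q : ℕ} (dT : ℕ)
    (e : ((Fin n ⊕ Fin rG) ⊕ (Fin (dT - 1) × (Fin n ⊕ Fin rG)) ⊕ (Fin n ⊕ Fin rG) ⊕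
        (Fin dT × (Fin rX ⊕ Fin rM))) → ZMod 2)
    (JbX : Matrix (Fin (k - q)) (Fin n ⊕ Fin rG) (ZMod 2)) (i : Fin (k - q)) :
    (JstX (rX := rX) (rM := rM) dT JbX).mulVec e i
      = JbX.mulVec (fun qq => e (Sum.inl qq) + (∑ t : Fin (dT - 1),
          e (Sum.inr (Sum.inl (t, qq)))) + e (Sum.inr (Sum.inr (Sum.inl qq)))) i := by
  simp only [Matrix.mulVec, dotProduct, Fintype.sum_sum_type, Fintype.sum_prod_type, JstX,
    Matrix.of_apply, zero_mul, mul_zero, Finset.sum_const_zero, add_zero, zero_add,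
    mul_add, Finset.mul_sum, Finset.sum_add_distrib]
  rw [show (∑ x : Fin (dT-1), ∑ a₁ : Fin n, JbX i (Sum.inl a₁) * e (Sum.inr (Sum.inl (x, Sum.inl a₁))))
      = ∑ a₁ : Fin n, ∑ x : Fin (dT-1), JbX i (Sum.inl a₁) * e (Sum.inr (Sum.inl (x, Sum.inl a₁)))
    from Finset.sum_comm,
    show (∑ x : Fin (dT-1), ∑ a₂ : Fin rG, JbX i (Sum.inr a₂) * e (Sum.inr (Sum.inl (x, Sum.inr a₂))))
      = ∑ a₂ : Fin rG, ∑ x : Fin (dT-1), JbX i (Sum.inr a₂) * e (Sum.inr (Sum.inl (x, Sum.inr a₂)))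
    from Finset.sum_comm]
  ring

end Aux

/-- idle logical qubits are protected against Z errors during code surgery. -/
theorem idle_qubits_Z_protected
    {n k q rX rZ rG rM nG : ℕ}
    (HX : Matrix (Fin rX) (Fin n) (ZMod 2)) (HZ : Matrix (Fin rZ) (Fin n) (ZMod 2))
    (JX JZ : Matrix (Fin k) (Fin n) (ZMod 2))
    (hHXHZ : HX * HZᵀ = 0) (hHXJZ : HX * JZᵀ = 0) (hHZJX : HZ * JXᵀ = 0)
    (hJXJZ : JX * JZᵀ = 1)
    (hq1 : 1 ≤ q) (hqk : q ≤ k)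
    (α : Matrix (Fin q) (Fin k) (ZMod 2))
    (αperp : Matrix (Fin (k - q)) (Fin k) (ZMod 2)) (hperp : αperp * αᵀ = 0)
    (αperpR : Matrix (Fin k) (Fin (k - q)) (ZMod 2)) (hrinv : αperp * αperpR = 1)
    (S : Matrix (Fin nG) (Fin n) (ZMod 2)) (T : Matrix (Fin rX) (Fin rG) (ZMod 2))
    (HG : Matrix (Fin rG) (Fin nG) (ZMod 2)) (HM : Matrix (Fin rM) (Fin rG) (ZMod 2))
    (R : Matrix (Fin n) (Fin nG) (ZMod 2)) (β : Matrix (Fin (k - q)) (Fin rG) (ZMod 2))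
    (hs1 : HX * Sᵀ = T * HG) (hs2 : HM * HG = 0)
    (hs3a : α * JZ * R * S = α * JZ) (hs3b : HG * (α * JZ * R)ᵀ = 0)
    (hs4 : αperp * JX * Sᵀ = β * HG)
    (dR : ℕ) (hdRpos : 0 < dR) (hbound : BoundedPair HG HM S dR)
    (dT : ℕ) (hdT : 2 ≤ dT)
    (δ : ℕ) (hδ : 0 < δ) (hδdR : δ ≤ dR) (j : Fin (k - q))
    (hdist : ∀ ψstar : Fin (k - q) → ZMod 2, ψstar j = 1 →
      (δ : ℕ∞) ≤ ewDist HX (αperp * JX) ψstar) :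
    ∀ e : (Fin n ⊕ Fin rG) ⊕ (Fin (dT - 1) × (Fin n ⊕ Fin rG)) ⊕ (Fin n ⊕ Fin rG) ⊕
        (Fin dT × (Fin rX ⊕ Fin rM)) → ZMod 2,
      (HstX dT (HbarX HX T HM)).mulVec e = 0 →
      (JstX dT (JbarX JX αperp β)).mulVec e j = 1 → δ ≤ hammingNorm e := by
  intro e hchk hlog
  classical
  set HbX := HbarX HX T HM with hHbX
  set m : Fin dT → (Fin rX ⊕ Fin rM) → ZMod 2 :=
    fun s c => e (Sum.inr (Sum.inr (Sum.inr (s, c)))) with hm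
  set g : ℕ → (Fin rX ⊕ Fin rM) → ZMod 2 :=
    fun i c => ∑ s : Fin dT, if (s : ℕ) = i then m s c else 0 with hg
  set f : (Fin n ⊕ Fin rG) → ZMod 2 :=
    fun qq => e (Sum.inl qq) + (∑ t : Fin (dT - 1), e (Sum.inr (Sum.inl (t, qq))))
      + e (Sum.inr (Sum.inr (Sum.inl qq))) with hfdef
  -- row equations
  have h1 : ∀ c, (∑ qq, HbX c qq * e (Sum.inl qq)) + g 0 c = 0 := by
    intro c
    have := congrFun hchk (Sum.inl c)
    rw [stp_row1] at this
    simpa using this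
  have h2 : ∀ (t : Fin (dT - 1)) c,
      (∑ qq, HbX c qq * e (Sum.inr (Sum.inl (t, qq)))) + (g (t : ℕ) c + g ((t : ℕ) + 1) c) = 0 := by
    intro t c
    have := congrFun hchk (Sum.inr (Sum.inl (t, c)))
    rw [stp_row2] at this
    have hsum : (∑ s : Fin dT, (if ((s : ℕ) = (t : ℕ) ∨ (s : ℕ) = (t : ℕ) + 1)
        then e (Sum.inr (Sum.inr (Sum.inr (s, c)))) else 0)) = g (t : ℕ) c + g ((t : ℕ) + 1) c := by
      rw [hg]
      rw [← Finset.sum_add_distrib]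
      refine Finset.sum_congr rfl fun s _ => ?_
      by_cases ha : (s : ℕ) = (t : ℕ) <;> by_cases hb : (s : ℕ) = (t : ℕ) + 1
      · omega
      · simp [ha, hb, hm]
      · simp [ha, hb, hm]
      · simp [ha, hb]
    rw [hsum] at this
    simpa using this
  have h3 : ∀ c, (∑ qq, HbX c qq * e (Sum.inr (Sum.inr (Sum.inl qq)))) + g (dT - 1) c = 0 := by
    intro c
    have := congrFun hchk (Sum.inr (Sum.inr c))
    rw [stp_row3] at this
    simpa using this
  -- Claim A : the accumulated error is a logical of the deformed code
  have claimA : HbX.mulVec f = 0 := by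
    funext c
    have expand : HbX.mulVec f c
        = (∑ qq, HbX c qq * e (Sum.inl qq))
          + (∑ t : Fin (dT - 1), ∑ qq, HbX c qq * e (Sum.inr (Sum.inl (t, qq))))
          + (∑ qq, HbX c qq * e (Sum.inr (Sum.inr (Sum.inl qq)))) := by
      simp only [Matrix.mulVec, dotProduct, hfdef, mul_add, Finset.mul_sum,
        Finset.sum_add_distrib]
      rw [show (∑ qq, ∑ t : Fin (dT - 1), HbX c qq * e (Sum.inr (Sum.inl (t, qq))))
          = ∑ t : Fin (dT - 1), ∑ qq, HbX c qq * e (Sum.inr (Sum.inl (t, qq)))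
        from Finset.sum_comm]
    have e1 : (∑ qq, HbX c qq * e (Sum.inl qq)) = g 0 c := by
      have := h1 c; linear_combination this - g 0 c * (CharTwo.two_eq_zero (R := ZMod 2))
    have e3 : (∑ qq, HbX c qq * e (Sum.inr (Sum.inr (Sum.inl qq)))) = g (dT - 1) c := by
      have := h3 c; linear_combination this - g (dT-1) c * (CharTwo.two_eq_zero (R := ZMod 2))
    have e2 : ∀ t : Fin (dT - 1),
        (∑ qq, HbX c qq * e (Sum.inr (Sum.inl (t, qq)))) = g (t : ℕ) c + g ((t : ℕ) + 1) c := by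
      intro t; have := h2 t c; linear_combination this - (g (t:ℕ) c + g ((t:ℕ)+1) c) * (CharTwo.two_eq_zero (R := ZMod 2))
    have tele : (∑ t : Fin (dT - 1), (g (t : ℕ) c + g ((t : ℕ) + 1) c))
        = g 0 c + g (dT - 1) c := by
      rw [Fin.sum_univ_eq_sum_range (fun i => g i c + g (i + 1) c) (dT - 1)]
      have hT := Finset.sum_range_sub (fun i => g i c) (dT - 1)
      simp only [CharTwo.sub_eq_add] at hT
      rw [Finset.sum_congr rfl (fun i _ => add_comm (g i c) (g (i + 1) c)), hT, add_comm]
    rw [expand, e1, e3, Finset.sum_congr rfl (fun t _ => e2 t), tele,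
      show ∀ a b : ZMod 2, a + (a + b) + b = (a + a) + (b + b) from fun a b => by ring]
    simp only [CharTwo.add_self_eq_zero, add_zero, Pi.zero_apply]
  -- Claim B : logical action transfers
  have claimB : (JbarX JX αperp β).mulVec f j = 1 := by
    rw [← stp_rowJ dT e (JbarX JX αperp β) j]
    exact hlog
  -- Claim C : weight bound
  have claimC : hammingNorm f ≤ hammingNorm e := by
    set a : (Fin n ⊕ Fin rG) → ZMod 2 := fun qq => e (Sum.inl qq) with ha
    set b : (Fin n ⊕ Fin rG) → ZMod 2 :=
      fun qq => ∑ t : Fin (dT - 1), e (Sum.inr (Sum.inl (t, qq))) with hb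
    set cc : (Fin n ⊕ Fin rG) → ZMod 2 := fun qq => e (Sum.inr (Sum.inr (Sum.inl qq))) with hcc
    have hfabc : f = a + b + cc := by funext qq; rfl
    have s1 : hammingNorm f ≤ hammingNorm a + hammingNorm b + hammingNorm cc := by
      rw [hfabc]
      calc hammingNorm (a + b + cc) ≤ hammingNorm (a + b) + hammingNorm cc :=
            stp_hn_add_le _ _
        _ ≤ hammingNorm a + hammingNorm b + hammingNorm cc := by
            have := stp_hn_add_le a b; omega
    have s2 : hammingNorm b ≤
        hammingNorm (fun p : Fin (dT - 1) × (Fin n ⊕ Fin rG) => e (Sum.inr (Sum.inl p))) := by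
      have hbs : b = ∑ t : Fin (dT - 1),
          (fun qq : Fin n ⊕ Fin rG => e (Sum.inr (Sum.inl (t, qq)))) := by
        funext qq; rw [hb]; simp [Finset.sum_apply]
      rw [hbs, stp_hn_prod (fun p : Fin (dT - 1) × (Fin n ⊕ Fin rG) => e (Sum.inr (Sum.inl p)))]
      exact stp_hn_finsum_le _ _
    have s3 : hammingNorm e = hammingNorm a
        + hammingNorm (fun p : Fin (dT - 1) × (Fin n ⊕ Fin rG) => e (Sum.inr (Sum.inl p)))
        + (hammingNorm cc + hammingNorm (fun p : Fin dT × (Fin rX ⊕ Fin rM) =>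
            e (Sum.inr (Sum.inr (Sum.inr p))))) := by
      rw [stp_hn_sumtype e, stp_hn_sumtype (e ∘ Sum.inr),
        stp_hn_sumtype ((e ∘ Sum.inr) ∘ Sum.inr)]
      have r1 : hammingNorm (e ∘ Sum.inl) = hammingNorm a := rfl
      have r2 : hammingNorm ((e ∘ Sum.inr) ∘ Sum.inl)
          = hammingNorm (fun p : Fin (dT-1) × (Fin n ⊕ Fin rG) => e (Sum.inr (Sum.inl p))) := rfl
      have r3 : hammingNorm (((e ∘ Sum.inr) ∘ Sum.inr) ∘ Sum.inl) = hammingNorm cc := rfl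
      have r4 : hammingNorm (((e ∘ Sum.inr) ∘ Sum.inr) ∘ Sum.inr)
          = hammingNorm (fun p : Fin dT × (Fin rX ⊕ Fin rM)
              => e (Sum.inr (Sum.inr (Sum.inr p)))) := rfl
      rw [r1, r2, r3, r4]; ring
    omega
  -- conclude via the deformed-code bound
  have hδf : δ ≤ hammingNorm f :=
    stp_deformed_bound HX JX αperp S T HG HM β hs1 hs4 dR hbound δ hδdR j hdist f claimA claimB
  omega
end

section
/- (Corollary: idle logical qubits are protected against X errors during code surgery.) Assume the CSS code and the code-surgery datum. Let δ be a positive integer and fix j ∈ {1, …, k−q}. Suppose every ψ⋆ ∈ F₂^{k−q} whose j-th entry equals 1 satisfies d(H_Z, (α_⊥ʳ)ᵀ J_Z, ψ⋆) ≥ δ. Then every e with H^{st}_Z eᵀ = 0 whose induced logical action flips the j-th unmeasured Z logical operator, i.e., (J^{st}_Z eᵀ)_j = 1, satisfies |e| ≥ δ. -/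
lemma sum_ite_fin {m : ℕ} (c : ℕ) (hc : c < m) (u : Fin m → ZMod 2) :
    (∑ s : Fin m, if (s : ℕ) = c then u s else 0) = u ⟨c, hc⟩ := by
  rw [Finset.sum_eq_single (⟨c, hc⟩ : Fin m)]
  · simp
  · intro b _ hb
    rw [if_neg (fun h => hb (Fin.ext h))]
  · simp

lemma sum_ite_fin_or {m : ℕ} (c d : ℕ) (hc : c < m) (hd : d < m) (hcd : c ≠ d)
    (u : Fin m → ZMod 2) :
    (∑ s : Fin m, if (s : ℕ) = c ∨ (s : ℕ) = d then u s else 0)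
      = u ⟨c, hc⟩ + u ⟨d, hd⟩ := by
  have : ∀ s : Fin m, (if (s : ℕ) = c ∨ (s : ℕ) = d then u s else 0)
      = (if (s : ℕ) = c then u s else 0) + (if (s : ℕ) = d then u s else 0) := by
    intro s
    by_cases h1 : (s : ℕ) = c <;> by_cases h2 : (s : ℕ) = d <;>
      simp_all [h1, h2] <;> omega
  simp_rw [this, Finset.sum_add_distrib, sum_ite_fin c hc u, sum_ite_fin d hd u]
open Matrix

/-- idle logical qubits are protected against X errors during code surgery. -/
theorem idle_qubits_X_protected
    {n k q rX rZ rG rM nG : ℕ}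
    (HX : Matrix (Fin rX) (Fin n) (ZMod 2)) (HZ : Matrix (Fin rZ) (Fin n) (ZMod 2))
    (JX JZ : Matrix (Fin k) (Fin n) (ZMod 2))
    (hHXHZ : HX * HZᵀ = 0) (hHXJZ : HX * JZᵀ = 0) (hHZJX : HZ * JXᵀ = 0)
    (hJXJZ : JX * JZᵀ = 1)
    (hq1 : 1 ≤ q) (hqk : q ≤ k)
    (α : Matrix (Fin q) (Fin k) (ZMod 2))
    (αperp : Matrix (Fin (k - q)) (Fin k) (ZMod 2)) (hperp : αperp * αᵀ = 0)
    (αperpR : Matrix (Fin k) (Fin (k - q)) (ZMod 2)) (hrinv : αperp * αperpR = 1)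
    (S : Matrix (Fin nG) (Fin n) (ZMod 2)) (T : Matrix (Fin rX) (Fin rG) (ZMod 2))
    (HG : Matrix (Fin rG) (Fin nG) (ZMod 2)) (HM : Matrix (Fin rM) (Fin rG) (ZMod 2))
    (R : Matrix (Fin n) (Fin nG) (ZMod 2)) (β : Matrix (Fin (k - q)) (Fin rG) (ZMod 2))
    (hs1 : HX * Sᵀ = T * HG) (hs2 : HM * HG = 0)
    (hs3a : α * JZ * R * S = α * JZ) (hs3b : HG * (α * JZ * R)ᵀ = 0)
    (hs4 : αperp * JX * Sᵀ = β * HG)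
    (dT : ℕ) (hdT : 2 ≤ dT)
    (δ : ℕ) (hδ : 0 < δ) (j : Fin (k - q))
    (hdist : ∀ ψstar : Fin (k - q) → ZMod 2, ψstar j = 1 →
      (δ : ℕ∞) ≤ ewDist HZ (αperpRᵀ * JZ) ψstar) :
    ∀ e : Fin n ⊕ (Fin (dT - 1) × (Fin n ⊕ Fin rG)) ⊕ Fin n ⊕
        (Fin dT × (Fin rZ ⊕ Fin nG)) → ZMod 2,
      (HstZ dT HZ (HbarZ HZ S HG)).mulVec e = 0 →
      (JstZ dT (αperpRᵀ * JZ) (JbarZ JZ αperpR)).mulVec e j = 1 → δ ≤ hammingNorm e := by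
  intro e h0 h1
  classical
  set JZ' := αperpRᵀ * JZ with hJZ'
  set fv : ℕ → Fin rZ → ZMod 2 := fun i z =>
    if h : i < dT then e (Sum.inr (Sum.inr (Sum.inr (⟨i, h⟩, Sum.inl z)))) else 0 with hfv
  have rowA : ∀ z : Fin rZ, ∑ a, HZ z a * e (Sum.inl a) = fv 0 z := by
    intro z
    have h := congrFun h0 (Sum.inl z)
    simp only [Matrix.mulVec, dotProduct, HstZ, Matrix.of_apply, Fintype.sum_sum_type,
      Fintype.sum_prod_type, Pi.zero_apply, zero_mul, Finset.sum_const_zero, add_zero, zero_add,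
      ite_mul, one_mul, Sum.inl.injEq, ite_and, Finset.sum_ite_irrel, Finset.sum_const_zero,
      Finset.sum_ite_eq', Finset.mem_univ, if_true, reduceCtorEq, if_false, ite_self] at h
    rw [sum_ite_fin 0 (by omega) _] at h
    have h' := CharTwo.add_eq_iff_eq_add.mp h
    rw [zero_add] at h'
    rw [h']
    simp [hfv, show (0:ℕ) < dT by omega]
  have rowC : ∀ z : Fin rZ,
      ∑ a, HZ z a * e (Sum.inr (Sum.inr (Sum.inl a))) = fv (dT - 1) z := by
    intro z
    have h := congrFun h0 (Sum.inr (Sum.inr z))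
    simp only [Matrix.mulVec, dotProduct, HstZ, Matrix.of_apply, Fintype.sum_sum_type,
      Fintype.sum_prod_type, Pi.zero_apply, zero_mul, Finset.sum_const_zero, add_zero, zero_add,
      ite_mul, one_mul, Sum.inl.injEq, ite_and, Finset.sum_ite_irrel, Finset.sum_const_zero,
      Finset.sum_ite_eq', Finset.mem_univ, if_true, reduceCtorEq, if_false, ite_self] at h
    rw [sum_ite_fin (dT - 1) (by omega) _] at h
    have h' := CharTwo.add_eq_iff_eq_add.mp h
    rw [zero_add] at h'
    rw [h']
    simp [hfv, show dT - 1 < dT by omega]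
  have rowB : ∀ (t : Fin (dT - 1)) (z : Fin rZ),
      ∑ a, HZ z a * e (Sum.inr (Sum.inl (t, Sum.inl a))) = fv (t : ℕ) z + fv ((t : ℕ) + 1) z := by
    intro t z
    have h := congrFun h0 (Sum.inr (Sum.inl (t, Sum.inl z)))
    simp only [Matrix.mulVec, dotProduct, HstZ, HbarZ, Matrix.of_apply,
      Matrix.fromBlocks_apply₁₁, Matrix.fromBlocks_apply₁₂, Matrix.zero_apply, Fintype.sum_sum_type,
      Fintype.sum_prod_type, Pi.zero_apply, zero_mul, Finset.sum_const_zero, add_zero, zero_add,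
      ite_mul, one_mul, Sum.inl.injEq, ite_and, Finset.sum_ite_irrel, Finset.sum_const_zero,
      Finset.sum_ite_eq', Finset.mem_univ, if_true, reduceCtorEq, if_false, ite_self] at h
    rw [sum_ite_fin_or (t : ℕ) ((t : ℕ) + 1) (by omega) (by omega) (by omega) _] at h
    have ht : (t : ℕ) < dT - 1 := t.isLt
    have h' := CharTwo.add_eq_iff_eq_add.mp h
    rw [zero_add] at h'
    rw [h']
    simp [hfv, show (t:ℕ) < dT by omega, show (t:ℕ) + 1 < dT by omega]
  set g : Fin n → ZMod 2 := fun a =>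
    e (Sum.inl a) + e (Sum.inr (Sum.inr (Sum.inl a))) +
      ∑ t : Fin (dT - 1), e (Sum.inr (Sum.inl (t, Sum.inl a))) with hgdef
  have claimA : HZ.mulVec g = 0 := by
    funext z
    show HZ.mulVec g z = 0
    have expand : HZ.mulVec g z =
        (∑ a, HZ z a * e (Sum.inl a)) + (∑ a, HZ z a * e (Sum.inr (Sum.inr (Sum.inl a))))
          + ∑ t : Fin (dT - 1), ∑ a, HZ z a * e (Sum.inr (Sum.inl (t, Sum.inl a))) := by
      simp only [Matrix.mulVec, dotProduct, hgdef, mul_add, Finset.sum_add_distrib,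
        Finset.mul_sum]
      rw [Finset.sum_comm]
    rw [expand, rowA z, rowC z]
    have hmid : (∑ t : Fin (dT - 1), ∑ a, HZ z a * e (Sum.inr (Sum.inl (t, Sum.inl a))))
        = fv (dT - 1) z + fv 0 z := by
      rw [Finset.sum_congr rfl (fun t _ => rowB t z)]
      rw [Fin.sum_univ_eq_sum_range (fun i => fv i z + fv (i + 1) z) (dT - 1)]
      have hsw : ∀ i : ℕ, fv i z + fv (i + 1) z = fv (i + 1) z - fv i z := by
        intro i; rw [CharTwo.sub_eq_add, add_comm]
      simp_rw [hsw]
      rw [Finset.sum_range_sub (fun i => fv i z), CharTwo.sub_eq_add]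
    rw [hmid]
    generalize fv 0 z = A
    generalize fv (dT - 1) z = B
    revert A B; decide
  have claimB : JZ'.mulVec g j = 1 := by
    simp only [Matrix.mulVec, dotProduct, JstZ, JbarZ, Matrix.of_apply,
      Matrix.fromCols_apply_inl, Matrix.fromCols_apply_inr, Matrix.zero_apply,
      Fintype.sum_sum_type, Fintype.sum_prod_type, zero_mul, mul_zero,
      Finset.sum_const_zero, add_zero, zero_add] at h1
    have expand : JZ'.mulVec g j =
        (∑ a, JZ' j a * e (Sum.inl a)) + (∑ a, JZ' j a * e (Sum.inr (Sum.inr (Sum.inl a))))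
          + ∑ t : Fin (dT - 1), ∑ a, JZ' j a * e (Sum.inr (Sum.inl (t, Sum.inl a))) := by
      simp only [Matrix.mulVec, dotProduct, hgdef, mul_add, Finset.sum_add_distrib,
        Finset.mul_sum]
      rw [Finset.sum_comm]
    rw [expand]
    rw [← hJZ'] at h1
    linear_combination h1
  have claimC : hammingNorm g ≤ hammingNorm e := by
    set prj : (Fin n ⊕ Fin (dT - 1) × (Fin n ⊕ Fin rG) ⊕ Fin n ⊕ Fin dT × (Fin rZ ⊕ Fin nG)) →
        Option (Fin n) := fun x => match x with
      | Sum.inl a => some a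
      | Sum.inr (Sum.inl (_, Sum.inl a)) => some a
      | Sum.inr (Sum.inr (Sum.inl a)) => some a
      | _ => none with hprj
    have key : ∀ a : Fin n, ∃ x, g a ≠ 0 → (e x ≠ 0 ∧ prj x = some a) := by
      intro a
      by_cases ha : g a = 0
      · exact ⟨Sum.inl a, fun h => absurd ha h⟩
      · by_cases h1' : e (Sum.inl a) ≠ 0
        · exact ⟨Sum.inl a, fun _ => ⟨h1', rfl⟩⟩
        · by_cases h3' : e (Sum.inr (Sum.inr (Sum.inl a))) ≠ 0
          · exact ⟨Sum.inr (Sum.inr (Sum.inl a)), fun _ => ⟨h3', rfl⟩⟩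
          · push_neg at h1' h3'
            have hex : ∃ t : Fin (dT - 1), e (Sum.inr (Sum.inl (t, Sum.inl a))) ≠ 0 := by
              by_contra hall
              push_neg at hall
              exact ha (by simp [hgdef, h1', h3', hall])
            obtain ⟨t, ht⟩ := hex
            exact ⟨Sum.inr (Sum.inl (t, Sum.inl a)), fun _ => ⟨ht, rfl⟩⟩
    choose F hF using key
    unfold hammingNorm
    apply Finset.card_le_card_of_injOn F
    · intro a ha
      simp only [Finset.coe_filter, Set.mem_setOf_eq, Finset.mem_filter, Finset.mem_univ, true_and] at ha ⊢
      exact (hF a ha).1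
    · intro a₁ ha₁ a₂ ha₂ hFa
      simp only [Finset.coe_filter, Set.mem_setOf_eq, Finset.mem_univ, true_and] at ha₁ ha₂
      have p₁ := (hF a₁ ha₁).2
      have p₂ := (hF a₂ ha₂).2
      rw [hFa] at p₁
      rw [p₂] at p₁
      exact Option.some_injective _ p₁.symm
  have hle : ewDist HZ JZ' (JZ'.mulVec g) ≤ (hammingNorm g : ℕ∞) :=
    sInf_le ⟨g, claimA, rfl, rfl⟩
  have hfin := le_trans (hdist _ claimB) hle
  exact le_trans (by exact_mod_cast hfin) claimC
end

section
/- (Corollary: effective independence of Z errors on injected magic states.) Assume the CSS code, the code-surgery datum, and that the pair (H_G, H_M) is (d_R, S)-bounded for a positive integer d_R. Let δ and w be positive integers with d_R ≥ δ, let p ≤ k−q, and let π = (E_p 0) ∈ F₂^{p×(k−q)} be the matrix selecting the first p coordinates. Suppose that for every ψ ∈ F₂^{p}, d(H_X, π α_⊥ J_X, ψ) ≥ min{ |ψ|·w, δ }. Then for every ψ ∈ F₂^{p}, d(H^{st}_X, π J^{st}_X, ψ) ≥ min{ |ψ|·w, δ }, where minima are taken in ℕ∞. -/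
open Matrix Finset


section Hamming
variable {ι κ : Type*} [Fintype ι] [Fintype κ]

lemma hn_eq_sum (f : ι → ZMod 2) :
    hammingNorm f = ∑ i, if f i ≠ 0 then 1 else 0 := by
  classical
  rw [hammingNorm, Finset.card_filter]

lemma hn_sumtype (f : ι ⊕ κ → ZMod 2) :
    hammingNorm f = hammingNorm (f ∘ Sum.inl) + hammingNorm (f ∘ Sum.inr) := by
  classical
  simp only [hn_eq_sum, Fintype.sum_sum_type]
  rfl

lemma hn_prodtype (f : ι × κ → ZMod 2) :
    hammingNorm f = ∑ i, hammingNorm (fun j => f (i, j)) := by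
  classical
  simp only [hn_eq_sum, Fintype.sum_prod_type]

lemma hn_add (f g : ι → ZMod 2) : hammingNorm (f + g) ≤ hammingNorm f + hammingNorm g := by
  classical
  rw [hammingNorm, hammingNorm, hammingNorm]
  refine le_trans (Finset.card_le_card ?_) (Finset.card_union_le _ _)
  intro i hi
  simp only [Finset.mem_filter, Finset.mem_union, Finset.mem_univ, true_and] at *
  by_contra hc
  push_neg at hc
  simp [Pi.add_apply, hc.1, hc.2] at hi

end Hamming

section sums
variable {ι κ : Type*} [Fintype ι] [Fintype κ]

lemma hn_finsum (s : Finset κ) (v : κ → ι → ZMod 2) :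
    hammingNorm (∑ i ∈ s, v i) ≤ ∑ i ∈ s, hammingNorm (v i) := by
  classical
  induction s using Finset.cons_induction with
  | empty => simp
  | cons a s ha ih =>
      rw [Finset.sum_cons, Finset.sum_cons]
      exact le_trans (hn_add _ _) (by omega)

lemma sum_val_eq {dT : ℕ} (m : ℕ) (hm : m < dT) (g : Fin dT → ZMod 2) :
    ∑ s : Fin dT, (if (s : ℕ) = m then g s else 0) = g ⟨m, hm⟩ := by
  rw [Finset.sum_eq_single ⟨m, hm⟩]
  · simp
  · intro b _ hb
    rw [if_neg]
    intro h
    exact hb (Fin.ext h)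
  · simp

end sums

lemma sum2_ite {dT : ℕ} {C : Type*} [Fintype C] [DecidableEq C] (m : ℕ) (hm : m < dT)
    (c : C) (g : Fin dT → C → ZMod 2) :
    ∑ s : Fin dT, ∑ c' : C, (if (s : ℕ) = m ∧ c' = c then g s c' else 0) = g ⟨m, hm⟩ c := by
  rw [Finset.sum_eq_single (⟨m, hm⟩ : Fin dT)]
  · simp
  · intro b _ hb
    rw [Finset.sum_eq_zero]
    intro c' _
    rw [if_neg]
    rintro ⟨h1, h2⟩
    exact hb (Fin.ext h1)
  · simp


lemma sum2_ite_or {dT : ℕ} {C : Type*} [Fintype C] [DecidableEq C] (m1 m2 : ℕ)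
    (h1 : m1 < dT) (h2 : m2 < dT) (hne : m1 ≠ m2) (c : C) (g : Fin dT → C → ZMod 2) :
    ∑ s : Fin dT, ∑ c' : C, (if ((s : ℕ) = m1 ∨ (s : ℕ) = m2) ∧ c' = c then g s c' else 0) =
      g ⟨m1, h1⟩ c + g ⟨m2, h2⟩ c := by
  have key : ∀ (s : Fin dT) (c' : C),
      (if ((s : ℕ) = m1 ∨ (s : ℕ) = m2) ∧ c' = c then g s c' else 0) =
        (if (s : ℕ) = m1 ∧ c' = c then g s c' else 0) +
          (if (s : ℕ) = m2 ∧ c' = c then g s c' else 0) := by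
    intro s c'
    split_ifs <;> simp_all <;> omega
  simp only [key, Finset.sum_add_distrib]
  rw [sum2_ite m1 h1 c g, sum2_ite m2 h2 c g]

section rows
variable {n rX rG rM : ℕ} (dT : ℕ) (hdT : 2 ≤ dT)
  (HbX : Matrix (Fin rX ⊕ Fin rM) (Fin n ⊕ Fin rG) (ZMod 2))
  (e : ((Fin n ⊕ Fin rG) ⊕ (Fin (dT - 1) × (Fin n ⊕ Fin rG)) ⊕ (Fin n ⊕ Fin rG) ⊕
        (Fin dT × (Fin rX ⊕ Fin rM))) → ZMod 2)

lemma row1 (c : Fin rX ⊕ Fin rM) :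
    (HstX dT HbX).mulVec e (Sum.inl c) =
      HbX.mulVec (fun qq => e (Sum.inl qq)) c
        + e (Sum.inr (Sum.inr (Sum.inr (⟨0, by omega⟩, c)))) := by
  simp only [HstX, mulVec, dotProduct, Fintype.sum_sum_type, Fintype.sum_prod_type, Matrix.of_apply]
  simp only [zero_mul, Finset.sum_const_zero, add_zero, zero_add, ite_mul, one_mul]
  have h := sum2_ite (dT := dT) 0 (by omega) c
    (fun s c' => e (Sum.inr (Sum.inr (Sum.inr (s, c')))))
  simp only [Fintype.sum_sum_type] at h ⊢
  rw [h]

lemma row2 (t : Fin (dT - 1)) (c : Fin rX ⊕ Fin rM) :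
    (HstX dT HbX).mulVec e (Sum.inr (Sum.inl (t, c))) =
      HbX.mulVec (fun qq => e (Sum.inr (Sum.inl (t, qq)))) c
        + e (Sum.inr (Sum.inr (Sum.inr (⟨(t : ℕ), by omega⟩, c))))
        + e (Sum.inr (Sum.inr (Sum.inr (⟨(t : ℕ) + 1, by omega⟩, c)))) := by
  simp only [HstX, mulVec, dotProduct, Fintype.sum_sum_type, Fintype.sum_prod_type,
    Matrix.of_apply, zero_mul, Finset.sum_const_zero, add_zero, zero_add, ite_mul, one_mul]
  have h := sum2_ite_or (dT := dT) (t : ℕ) ((t : ℕ) + 1) (by omega) (by omega) (by omega) c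
    (fun s c' => e (Sum.inr (Sum.inr (Sum.inr (s, c')))))
  simp only [Fintype.sum_sum_type] at h ⊢
  rw [h, ← add_assoc]
  congr 1
  simp [Finset.sum_ite_irrel, Finset.sum_ite_eq', Finset.sum_add_distrib]

lemma row3 (c : Fin rX ⊕ Fin rM) :
    (HstX dT HbX).mulVec e (Sum.inr (Sum.inr c)) =
      HbX.mulVec (fun qq => e (Sum.inr (Sum.inr (Sum.inl qq)))) c
        + e (Sum.inr (Sum.inr (Sum.inr (⟨dT - 1, by omega⟩, c)))) := by
  simp only [HstX, mulVec, dotProduct, Fintype.sum_sum_type, Fintype.sum_prod_type,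
    Matrix.of_apply, zero_mul, Finset.sum_const_zero, add_zero, zero_add, ite_mul, one_mul]
  have h := sum2_ite (dT := dT) (dT - 1) (by omega) c
    (fun s c' => e (Sum.inr (Sum.inr (Sum.inr (s, c')))))
  simp only [Fintype.sum_sum_type] at h ⊢
  rw [h]

lemma rowJ {k q : ℕ} (JbX : Matrix (Fin (k - q)) (Fin n ⊕ Fin rG) (ZMod 2)) (i : Fin (k - q)) :
    (JstX (k := k) (q := q) (rX := rX) (rM := rM) dT JbX).mulVec e i =
      JbX.mulVec (fun qq => e (Sum.inl qq)) i
        + (∑ t : Fin (dT - 1), JbX.mulVec (fun qq => e (Sum.inr (Sum.inl (t, qq)))) i)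
        + JbX.mulVec (fun qq => e (Sum.inr (Sum.inr (Sum.inl qq)))) i := by
  simp only [JstX, mulVec, dotProduct, Fintype.sum_sum_type, Fintype.sum_prod_type,
    Matrix.of_apply, zero_mul, Finset.sum_const_zero, add_zero, Finset.sum_add_distrib]
  ring

end rows


lemma mulVec_finsum {ι κ μ : Type*} [Fintype κ] [Fintype μ]
    (A : Matrix ι κ (ZMod 2)) (s : Finset μ) (v : μ → κ → ZMod 2) :
    A.mulVec (∑ i ∈ s, v i) = ∑ i ∈ s, A.mulVec (v i) := by
  ext c
  simp only [mulVec, dotProduct, Finset.sum_apply, Finset.mul_sum]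
  rw [Finset.sum_comm]

lemma mulVec_split3 {ι X' : Type*} [Fintype X'] {m : ℕ} (M : Matrix ι X' (ZMod 2))
    (a : X' → ZMod 2) (b : Fin m → X' → ZMod 2) (cc : X' → ZMod 2) (i : ι) :
    M.mulVec (a + (∑ t, b t) + cc) i =
      M.mulVec a i + (∑ t, M.mulVec (b t) i) + M.mulVec cc i := by
  rw [Matrix.mulVec_add, Matrix.mulVec_add, mulVec_finsum]
  simp [Finset.sum_apply]

/-- effective independence of Z errors on injected magic states. -/
theorem effective_independence_Z
    {n k q rX rZ rG rM nG : ℕ}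
    (HX : Matrix (Fin rX) (Fin n) (ZMod 2)) (HZ : Matrix (Fin rZ) (Fin n) (ZMod 2))
    (JX JZ : Matrix (Fin k) (Fin n) (ZMod 2))
    (hHXHZ : HX * HZᵀ = 0) (hHXJZ : HX * JZᵀ = 0) (hHZJX : HZ * JXᵀ = 0)
    (hJXJZ : JX * JZᵀ = 1)
    (hq1 : 1 ≤ q) (hqk : q ≤ k)
    (α : Matrix (Fin q) (Fin k) (ZMod 2))
    (αperp : Matrix (Fin (k - q)) (Fin k) (ZMod 2)) (hperp : αperp * αᵀ = 0)
    (αperpR : Matrix (Fin k) (Fin (k - q)) (ZMod 2)) (hrinv : αperp * αperpR = 1)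
    (S : Matrix (Fin nG) (Fin n) (ZMod 2)) (T : Matrix (Fin rX) (Fin rG) (ZMod 2))
    (HG : Matrix (Fin rG) (Fin nG) (ZMod 2)) (HM : Matrix (Fin rM) (Fin rG) (ZMod 2))
    (R : Matrix (Fin n) (Fin nG) (ZMod 2)) (β : Matrix (Fin (k - q)) (Fin rG) (ZMod 2))
    (hs1 : HX * Sᵀ = T * HG) (hs2 : HM * HG = 0)
    (hs3a : α * JZ * R * S = α * JZ) (hs3b : HG * (α * JZ * R)ᵀ = 0)
    (hs4 : αperp * JX * Sᵀ = β * HG)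
    (dR : ℕ) (hdRpos : 0 < dR) (hbound : BoundedPair HG HM S dR)
    (dT : ℕ) (hdT : 2 ≤ dT)
    (δ w p : ℕ) (hδ : 0 < δ) (hwpos : 0 < w) (hδdR : δ ≤ dR) (hp : p ≤ k - q)
    (hdist : ∀ ψ : Fin p → ZMod 2,
      min ((hammingNorm ψ * w : ℕ) : ℕ∞) (δ : ℕ∞) ≤
        ewDist HX (projFirst p (k - q) * (αperp * JX)) ψ) :
    ∀ ψ : Fin p → ZMod 2,
      min ((hammingNorm ψ * w : ℕ) : ℕ∞) (δ : ℕ∞) ≤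
        ewDist (HstX dT (HbarX HX T HM))
          (projFirst p (k - q) * JstX dT (JbarX JX αperp β)) ψ := by
  intro ψ
  rw [ewDist]
  refine le_sInf ?_
  rintro w' ⟨e, hH, hJ, rfl⟩
  set e0 : (Fin n ⊕ Fin rG) → ZMod 2 := fun qq => e (Sum.inl qq) with he0
  set eT : Fin (dT - 1) → (Fin n ⊕ Fin rG) → ZMod 2 :=
    fun t qq => e (Sum.inr (Sum.inl (t, qq))) with heT
  set eL : (Fin n ⊕ Fin rG) → ZMod 2 := fun qq => e (Sum.inr (Sum.inr (Sum.inl qq))) with heL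
  set f : Fin dT → (Fin rX ⊕ Fin rM) → ZMod 2 :=
    fun s c => e (Sum.inr (Sum.inr (Sum.inr (s, c)))) with hfdef
  set ebar : (Fin n ⊕ Fin rG) → ZMod 2 := e0 + (∑ t, eT t) + eL with hebar
  -- the check equations
  have hr1 : (HbarX HX T HM).mulVec e0 + f ⟨0, by omega⟩ = 0 := by
    funext c
    have h := congrFun hH (Sum.inl c)
    rw [row1 dT hdT (HbarX HX T HM) e c] at h
    exact h
  have hr2 : ∀ t : Fin (dT - 1), (HbarX HX T HM).mulVec (eT t)
      + f ⟨(t : ℕ), by omega⟩ + f ⟨(t : ℕ) + 1, by omega⟩ = 0 := by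
    intro t
    funext c
    have h := congrFun hH (Sum.inr (Sum.inl (t, c)))
    rw [row2 dT hdT (HbarX HX T HM) e t c] at h
    exact h
  have hr3 : (HbarX HX T HM).mulVec eL + f ⟨dT - 1, by omega⟩ = 0 := by
    funext c
    have h := congrFun hH (Sum.inr (Sum.inr c))
    rw [row3 dT hdT (HbarX HX T HM) e c] at h
    exact h
  -- telescoping: H̄_X ē = 0
  have hHbar : (HbarX HX T HM).mulVec ebar = 0 := by
    funext c
    rw [hebar, mulVec_split3]
    set g : ℕ → ZMod 2 := fun m => if h : m < dT then f ⟨m, h⟩ c else 0 with hg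
    have h1 : (HbarX HX T HM).mulVec e0 c = g 0 := by
      have h := congrFun hr1 c
      have h0 : (0:ℕ) < dT := by omega
      rw [hg]
      simp only [dif_pos h0]
      have ha : ∀ a b : ZMod 2, a + b = 0 → a = b := by decide
      exact ha _ _ h
    have h3 : (HbarX HX T HM).mulVec eL c = g (dT - 1) := by
      have h := congrFun hr3 c
      have h0 : dT - 1 < dT := by omega
      rw [hg]
      simp only [dif_pos h0]
      have ha : ∀ a b : ZMod 2, a + b = 0 → a = b := by decide
      exact ha _ _ h
    have h2 : ∀ t : Fin (dT - 1), (HbarX HX T HM).mulVec (eT t) c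
        = g ((t : ℕ) + 1) - g (t : ℕ) := by
      intro t
      have h := congrFun (hr2 t) c
      have ha : ∀ a b d : ZMod 2, a + b + d = 0 → a = d - b := by decide
      have hlt1 : (t : ℕ) < dT := by omega
      have hlt2 : (t : ℕ) + 1 < dT := by omega
      rw [hg]
      simp only [dif_pos hlt1, dif_pos hlt2]
      exact ha _ _ _ h
    rw [h1, h3]
    have hsum : (∑ t : Fin (dT - 1), (HbarX HX T HM).mulVec (eT t) c)
        = g (dT - 1) - g 0 := by
      calc (∑ t : Fin (dT - 1), (HbarX HX T HM).mulVec (eT t) c)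
          = ∑ t : Fin (dT - 1), (g ((t : ℕ) + 1) - g (t : ℕ)) :=
            Finset.sum_congr rfl (fun t _ => h2 t)
        _ = ∑ i ∈ Finset.range (dT - 1), (g (i + 1) - g i) :=
            Fin.sum_univ_eq_sum_range (fun i => g (i + 1) - g i) (dT - 1)
        _ = g (dT - 1) - g 0 := Finset.sum_range_sub g (dT - 1)
    rw [hsum]
    have hz : ∀ a b : ZMod 2, a + (b - a) + b = 0 := by decide
    exact hz _ _
  -- logical equation for ē
  have hJbar : (projFirst p (k - q) * JbarX JX αperp β).mulVec ebar = ψ := by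
    funext i
    have hJi := congrFun hJ i
    rw [← Matrix.mulVec_mulVec] at hJi ⊢
    rw [← hJi]
    congr 1
    funext j
    rw [rowJ dT e (JbarX JX αperp β) j, hebar, mulVec_split3]
  -- weight bound
  have hsplit : hammingNorm e = hammingNorm e0 + ((∑ t, hammingNorm (eT t))
      + (hammingNorm eL + hammingNorm (fun sc : Fin dT × (Fin rX ⊕ Fin rM) =>
          e (Sum.inr (Sum.inr (Sum.inr sc)))))) := by
    rw [hn_sumtype e, hn_sumtype (e ∘ Sum.inr), hn_sumtype ((e ∘ Sum.inr) ∘ Sum.inr)]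
    have hprod : hammingNorm ((e ∘ Sum.inr) ∘ Sum.inl) = ∑ t, hammingNorm (eT t) :=
      hn_prodtype _
    rw [hprod]
    rfl
  have hw_e : hammingNorm ebar ≤ hammingNorm e := by
    have h1 : hammingNorm ebar ≤ hammingNorm e0 + hammingNorm (∑ t, eT t)
        + hammingNorm eL := le_trans (hn_add _ _) (by
          have := hn_add e0 (∑ t, eT t)
          omega)
    have h2 : hammingNorm (∑ t, eT t) ≤ ∑ t, hammingNorm (eT t) :=
      hn_finsum Finset.univ eT
    omega
  -- split ebar into data and gauge parts
  set en : Fin n → ZMod 2 := ebar ∘ Sum.inl with hen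
  set eg : Fin rG → ZMod 2 := ebar ∘ Sum.inr with heg
  have hwsplit : hammingNorm ebar = hammingNorm en + hammingNorm eg := hn_sumtype ebar
  have helim : ebar = Sum.elim en eg := by funext x; cases x <;> rfl
  have hfb := hHbar
  rw [helim, HbarX, Matrix.fromBlocks_mulVec] at hfb
  have hA : HX.mulVec en + T.mulVec eg = 0 := by
    funext c; exact congrFun hfb (Sum.inl c)
  have hB : HM.mulVec eg = 0 := by
    funext c
    have h := congrFun hfb (Sum.inr c)
    simpa [Matrix.zero_mulVec] using h
  have hJsum : (projFirst p (k - q)).mulVec ((αperp * JX).mulVec en + β.mulVec eg) = ψ := by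
    have h := hJbar
    rw [← Matrix.mulVec_mulVec, helim, JbarX, Matrix.fromCols_mulVec_sumElim] at h
    exact h
  rcases le_or_gt δ (hammingNorm ebar) with hcase | hcase
  · refine le_trans (min_le_right _ _) ?_
    exact_mod_cast le_trans hcase hw_e
  · have hgdR : hammingNorm eg < dR := by omega
    obtain ⟨u, hu, hus⟩ := hbound eg hB hgdR
    set e' : Fin n → ZMod 2 := en + Matrix.vecMul u S with he'
    have hH' : HX.mulVec e' = 0 := by
      rw [he', Matrix.mulVec_add, Matrix.mulVec_vecMul, hs1, ← Matrix.mulVec_mulVec, ← hu]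
      exact hA
    have hJ' : (projFirst p (k - q) * (αperp * JX)).mulVec e' = ψ := by
      have hkey : (β * HG).mulVec u = β.mulVec eg := by
        rw [← Matrix.mulVec_mulVec, ← hu]
      rw [← Matrix.mulVec_mulVec, he', Matrix.mulVec_add, Matrix.mulVec_vecMul, hs4, hkey]
      exact hJsum
    have hw' : hammingNorm e' ≤ hammingNorm e := le_trans (hn_add _ _) (by omega)
    refine le_trans (hdist ψ) (le_trans (sInf_le ⟨e', hH', hJ', rfl⟩) ?_)
    exact_mod_cast hw'
end

section
/- (Corollary: effective independence of measurement-outcome errors on injected magic states.) Assume the CSS code and the code-surgery datum. Let δ and w be positive integers with d_T ≥ δ. Suppose that for every ψ ∈ F₂^{q}, d(H_Z, α J_Z, ψ) ≥ min{ |ψ|·w, δ }. Then for every ψ ∈ F₂^{q}, d(H^{st}_Z, J^{st}_{oc}, ψ) ≥ min{ |ψ|·w, δ }, where minima are taken in ℕ∞. -/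
open Matrix

lemma sum_ite_val {M : Type*} [AddCommMonoid M] {m c : ℕ} (hc : c < m) (f : Fin m → M) :
    (∑ s : Fin m, if (s : ℕ) = c then f s else 0) = f ⟨c, hc⟩ := by
  have : ∀ s : Fin m, (if (s : ℕ) = c then f s else 0)
      = if s = (⟨c, hc⟩ : Fin m) then f s else 0 := by
    intro s; exact if_congr (by simp [Fin.ext_iff]) rfl rfl
  simp only [this]
  simp [Finset.sum_ite_eq']

lemma ite_or_add {M : Type*} [AddCommMonoid M] {p q : Prop} [Decidable p] [Decidable q]
    (h : ¬(p ∧ q)) (x : M) :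
    (if p ∨ q then x else 0) = (if p then x else 0) + (if q then x else 0) := by
  by_cases hp : p <;> by_cases hq : q <;> simp [hp, hq] <;> tauto
section rows1
variable {n rZ rG nG : ℕ} {dT : ℕ}

lemma HstZ_row1 (HZ : Matrix (Fin rZ) (Fin n) (ZMod 2))
    (HbZ : Matrix (Fin rZ ⊕ Fin nG) (Fin n ⊕ Fin rG) (ZMod 2))
    (e : (Fin n ⊕ (Fin (dT - 1) × (Fin n ⊕ Fin rG)) ⊕ Fin n ⊕
        (Fin dT × (Fin rZ ⊕ Fin nG))) → ZMod 2)
    (h0 : 0 < dT) (z : Fin rZ) :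
    (HstZ dT HZ HbZ).mulVec e (Sum.inl z) =
      HZ.mulVec (fun a => e (Sum.inl a)) z
        + e (Sum.inr (Sum.inr (Sum.inr (⟨0, h0⟩, Sum.inl z)))) := by
  simp only [Matrix.mulVec, dotProduct, HstZ, Matrix.of_apply,
    Fintype.sum_sum_type, Fintype.sum_prod_type]
  simp only [zero_mul, Finset.sum_const_zero, ite_mul, one_mul, ite_and, add_zero, zero_add]
  congr 1
  rw [← sum_ite_val h0 (fun s => e (Sum.inr (Sum.inr (Sum.inr (s, Sum.inl z)))))]
  refine Finset.sum_congr rfl fun s _ => ?_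
  by_cases hs : (s : ℕ) = 0 <;> simp [hs, Finset.sum_ite_eq']

end rows1
section rows2
variable {n rZ rG nG qq : ℕ} {dT : ℕ}

lemma HstZ_row3 (HZ : Matrix (Fin rZ) (Fin n) (ZMod 2))
    (HbZ : Matrix (Fin rZ ⊕ Fin nG) (Fin n ⊕ Fin rG) (ZMod 2))
    (e : (Fin n ⊕ (Fin (dT - 1) × (Fin n ⊕ Fin rG)) ⊕ Fin n ⊕
        (Fin dT × (Fin rZ ⊕ Fin nG))) → ZMod 2)
    (h0 : dT - 1 < dT) (z : Fin rZ) :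
    (HstZ dT HZ HbZ).mulVec e (Sum.inr (Sum.inr z)) =
      HZ.mulVec (fun a => e (Sum.inr (Sum.inr (Sum.inl a)))) z
        + e (Sum.inr (Sum.inr (Sum.inr (⟨dT - 1, h0⟩, Sum.inl z)))) := by
  simp only [Matrix.mulVec, dotProduct, HstZ, Matrix.of_apply,
    Fintype.sum_sum_type, Fintype.sum_prod_type]
  simp only [zero_mul, Finset.sum_const_zero, ite_mul, one_mul, ite_and, add_zero, zero_add]
  congr 1
  rw [← sum_ite_val h0 (fun s => e (Sum.inr (Sum.inr (Sum.inr (s, Sum.inl z)))))]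
  refine Finset.sum_congr rfl fun s _ => ?_
  by_cases hs : (s : ℕ) = dT - 1 <;> simp [hs, Finset.sum_ite_eq']

lemma HstZ_row2 (HZ : Matrix (Fin rZ) (Fin n) (ZMod 2))
    (HbZ : Matrix (Fin rZ ⊕ Fin nG) (Fin n ⊕ Fin rG) (ZMod 2))
    (e : (Fin n ⊕ (Fin (dT - 1) × (Fin n ⊕ Fin rG)) ⊕ Fin n ⊕
        (Fin dT × (Fin rZ ⊕ Fin nG))) → ZMod 2)
    (t : Fin (dT - 1)) (ht1 : (t : ℕ) < dT) (ht2 : (t : ℕ) + 1 < dT) (w : Fin rZ ⊕ Fin nG) :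
    (HstZ dT HZ HbZ).mulVec e (Sum.inr (Sum.inl (t, w))) =
      HbZ.mulVec (fun qq => e (Sum.inr (Sum.inl (t, qq)))) w
        + e (Sum.inr (Sum.inr (Sum.inr (⟨(t : ℕ), ht1⟩, w))))
        + e (Sum.inr (Sum.inr (Sum.inr (⟨(t : ℕ) + 1, ht2⟩, w)))) := by
  simp only [Matrix.mulVec, dotProduct, HstZ, Matrix.of_apply,
    Fintype.sum_sum_type, Fintype.sum_prod_type]
  simp only [zero_mul, Finset.sum_const_zero, ite_mul, one_mul, ite_and, add_zero, zero_add]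
  rw [add_assoc]
  congr 1
  · -- middle block
    rw [Finset.sum_add_distrib]
    congr 1 <;> (rw [Finset.sum_comm]; simp [Finset.sum_ite_eq'])
  · -- last block
    have key : ∀ s : Fin dT,
        ((∑ z' : Fin rZ, if (s : ℕ) = (t : ℕ) ∨ (s : ℕ) = (t : ℕ) + 1 then
            (if Sum.inl z' = w then e (Sum.inr (Sum.inr (Sum.inr (s, Sum.inl z')))) else 0)
          else 0)
          + ∑ g : Fin nG, if (s : ℕ) = (t : ℕ) ∨ (s : ℕ) = (t : ℕ) + 1 then
            (if Sum.inr g = w then e (Sum.inr (Sum.inr (Sum.inr (s, Sum.inr g)))) else 0)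
          else 0)
        = (if (s : ℕ) = (t : ℕ) then e (Sum.inr (Sum.inr (Sum.inr (s, w)))) else 0)
          + (if (s : ℕ) = (t : ℕ) + 1 then e (Sum.inr (Sum.inr (Sum.inr (s, w)))) else 0) := by
      intro s
      rw [← Fintype.sum_sum_type
        (fun w' : Fin rZ ⊕ Fin nG =>
          if (s : ℕ) = (t : ℕ) ∨ (s : ℕ) = (t : ℕ) + 1 then
            (if w' = w then e (Sum.inr (Sum.inr (Sum.inr (s, w')))) else 0) else 0)]
      by_cases hs : (s : ℕ) = (t : ℕ) ∨ (s : ℕ) = (t : ℕ) + 1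
      · rcases hs with h | h
        · have h2 : ¬((s : ℕ) = (t : ℕ) + 1) := by omega
          simp [h, h2, Finset.sum_ite_eq']
        · have h2 : ¬((s : ℕ) = (t : ℕ)) := by omega
          simp [h, h2, Finset.sum_ite_eq']
      · push_neg at hs
        simp [hs.1, hs.2]
    simp only [key]
    rw [Finset.sum_add_distrib, sum_ite_val ht1, sum_ite_val ht2]

lemma JstOC_row (M : Matrix (Fin qq) (Fin n) (ZMod 2))
    (N : Matrix (Fin qq) (Fin nG) (ZMod 2))
    (e : (Fin n ⊕ (Fin (dT - 1) × (Fin n ⊕ Fin rG)) ⊕ Fin n ⊕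
        (Fin dT × (Fin rZ ⊕ Fin nG))) → ZMod 2)
    (h0 : 0 < dT) (i : Fin qq) :
    (JstOC dT M N : Matrix (Fin qq) _ (ZMod 2)).mulVec e i =
      M.mulVec (fun a => e (Sum.inl a)) i
        + N.mulVec (fun g => e (Sum.inr (Sum.inr (Sum.inr (⟨0, h0⟩, Sum.inr g))))) i := by
  simp only [Matrix.mulVec, dotProduct, JstOC, Matrix.of_apply,
    Fintype.sum_sum_type, Fintype.sum_prod_type]
  simp only [zero_mul, Finset.sum_const_zero, ite_mul, add_zero, zero_add]
  congr 1
  rw [← sum_ite_val h0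
    (fun s => ∑ g, N i g * e (Sum.inr (Sum.inr (Sum.inr (s, Sum.inr g)))))]
  refine Finset.sum_congr rfl fun s _ => ?_
  by_cases hs : (s : ℕ) = 0 <;> simp [hs]

end rows2
section blocks
variable {n rZ rG nG : ℕ}

lemma HbarZ_mulVec_inl (HZ : Matrix (Fin rZ) (Fin n) (ZMod 2))
    (S : Matrix (Fin nG) (Fin n) (ZMod 2)) (HG : Matrix (Fin rG) (Fin nG) (ZMod 2))
    (v : (Fin n ⊕ Fin rG) → ZMod 2) (z : Fin rZ) :
    (HbarZ HZ S HG).mulVec v (Sum.inl z) = HZ.mulVec (fun a => v (Sum.inl a)) z := by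
  simp [HbarZ, Matrix.mulVec, dotProduct, Fintype.sum_sum_type]

lemma HbarZ_mulVec_inr (HZ : Matrix (Fin rZ) (Fin n) (ZMod 2))
    (S : Matrix (Fin nG) (Fin n) (ZMod 2)) (HG : Matrix (Fin rG) (Fin nG) (ZMod 2))
    (v : (Fin n ⊕ Fin rG) → ZMod 2) (g : Fin nG) :
    (HbarZ HZ S HG).mulVec v (Sum.inr g) =
      S.mulVec (fun a => v (Sum.inl a)) g + HGᵀ.mulVec (fun c => v (Sum.inr c)) g := by
  simp [HbarZ, Matrix.mulVec, dotProduct, Fintype.sum_sum_type]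

end blocks
lemma hammingNorm_le_of_inj {J A : Type*} [Fintype J] [Fintype A] [DecidableEq J]
    (f : A → ZMod 2) (e : J → ZMod 2) (g : A → J)
    (hmap : ∀ a, f a ≠ 0 → e (g a) ≠ 0)
    (hinj : ∀ a b, f a ≠ 0 → f b ≠ 0 → g a = g b → a = b) :
    hammingNorm f ≤ hammingNorm e := by
  unfold hammingNorm
  apply Finset.card_le_card_of_injOn g
  · intro a ha
    simp only [Finset.coe_filter, Set.mem_setOf_eq, Finset.mem_filter, Finset.mem_univ, true_and] at ha ⊢
    exact hmap a ha
  · intro a ha b hb hab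
    simp only [Finset.coe_filter, Set.mem_setOf_eq, Finset.mem_univ, true_and] at ha hb
    exact hinj a b ha hb hab

lemma card_le_hammingNorm' {J A : Type*} [Fintype J] [Fintype A] [DecidableEq J]
    (e : J → ZMod 2) (g : A → J)
    (hmap : ∀ a, e (g a) ≠ 0)
    (hinj : ∀ a b, g a = g b → a = b) :
    Fintype.card A ≤ hammingNorm e := by
  unfold hammingNorm
  rw [← Finset.card_univ]
  apply Finset.card_le_card_of_injOn g
  · intro a _
    simp only [Finset.coe_filter, Set.mem_setOf_eq, Finset.mem_filter, Finset.mem_univ, true_and]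
    exact hmap a
  · intro a _ b _ hab
    exact hinj a b hab
lemma weight_transfer {n m : ℕ} {J : Type*} [Fintype J] [DecidableEq J]
    (e : J → ZMod 2) (p : Fin n → J) (r : Fin m → Fin n → J)
    (hinj1 : ∀ a b, p a = p b → a = b)
    (hinj2 : ∀ t a t' b, r t a = r t' b → a = b)
    (hd : ∀ t a b, r t a ≠ p b)
    (f : Fin n → ZMod 2)
    (hsum : ∀ a, f a ≠ 0 → e (p a) ≠ 0 ∨ ∃ t, e (r t a) ≠ 0) :
    hammingNorm f ≤ hammingNorm e := by
  classical
  apply hammingNorm_le_of_inj f e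
    (fun a => if e (p a) ≠ 0 then p a
      else if h2 : ∃ t, e (r t a) ≠ 0 then r h2.choose a else p a)
  · intro a ha
    by_cases h0 : e (p a) ≠ 0
    · rw [if_pos h0]; exact h0
    · have hex : ∃ t, e (r t a) ≠ 0 := (hsum a ha).resolve_left h0
      rw [if_neg h0, dif_pos hex]
      exact hex.choose_spec
  · intro a b _ _ hab
    by_cases h0a : e (p a) ≠ 0 <;> by_cases h0b : e (p b) ≠ 0
    · rw [if_pos h0a, if_pos h0b] at hab; exact hinj1 _ _ hab
    · rw [if_pos h0a, if_neg h0b] at hab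
      split_ifs at hab with h2
      · exact absurd hab.symm (hd _ _ _)
      · exact hinj1 _ _ hab
    · rw [if_neg h0a, if_pos h0b] at hab
      split_ifs at hab with h2
      · exact absurd hab (hd _ _ _)
      · exact hinj1 _ _ hab
    · rw [if_neg h0a, if_neg h0b] at hab
      split_ifs at hab with h2 h3 h3
      · exact hinj2 _ _ _ _ hab
      · exact absurd hab (hd _ _ _)
      · exact absurd hab.symm (hd _ _ _)
      · exact hinj1 _ _ hab
lemma mulVec_add_apply {m' n' : ℕ} (A : Matrix (Fin m') (Fin n') (ZMod 2))
    (x y : Fin n' → ZMod 2) (i : Fin m') :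
    A.mulVec (fun j => x j + y j) i = A.mulVec x i + A.mulVec y i := by
  simp [Matrix.mulVec, dotProduct, mul_add, Finset.sum_add_distrib]

theorem effective_independence_oc'
    {n k q rZ rG nG : ℕ}
    (HZ : Matrix (Fin rZ) (Fin n) (ZMod 2))
    (JZ : Matrix (Fin k) (Fin n) (ZMod 2))
    (α : Matrix (Fin q) (Fin k) (ZMod 2))
    (S : Matrix (Fin nG) (Fin n) (ZMod 2))
    (HG : Matrix (Fin rG) (Fin nG) (ZMod 2))
    (R : Matrix (Fin n) (Fin nG) (ZMod 2))
    (hs3a : α * JZ * R * S = α * JZ) (hs3b : HG * (α * JZ * R)ᵀ = 0)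
    (dT : ℕ) (hdT : 2 ≤ dT)
    (δ w : ℕ) (hδ : 0 < δ) (hδdT : δ ≤ dT)
    (hdist : ∀ ψ : Fin q → ZMod 2,
      min ((hammingNorm ψ * w : ℕ) : ℕ∞) (δ : ℕ∞) ≤ ewDist HZ (α * JZ) ψ) :
    ∀ ψ : Fin q → ZMod 2,
      min ((hammingNorm ψ * w : ℕ) : ℕ∞) (δ : ℕ∞) ≤
        ewDist (HstZ dT HZ (HbarZ HZ S HG)) (JstOC dT (α * JZ) (α * JZ * R)) ψ := by
  intro ψ
  refine le_sInf fun w' hw' => ?_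
  obtain ⟨e, he1, he2, rfl⟩ := hw'
  by_cases hbig : δ ≤ hammingNorm e
  · exact le_trans (min_le_right _ _) (by exact_mod_cast hbig)
  push_neg at hbig
  -- matrix facts
  have hNH : (α * JZ * R) * HGᵀ = 0 := by
    have := congrArg Matrix.transpose hs3b
    simpa [Matrix.transpose_mul] using this
  -- char-2 helpers
  have lem1 : ∀ a b : ZMod 2, a + b = 0 → a = b := by decide
  have lem2 : ∀ x a b c : ZMod 2, x = b → a + b + c = 0 → x + a = c := by decide
  have lem3 : ∀ x y u v p : ZMod 2, x + y = p → v + u + y = 0 → x + u + v = p := by decide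
  -- pigeonhole: a round with no measurement error
  obtain ⟨s0, hm0⟩ : ∃ s0 : Fin dT, ∀ ww : Fin rZ ⊕ Fin nG,
      e (Sum.inr (Sum.inr (Sum.inr (s0, ww)))) = 0 := by
    by_contra hcon
    push_neg at hcon
    have hcard := card_le_hammingNorm' e
      (fun s : Fin dT => Sum.inr (Sum.inr (Sum.inr (s, (hcon s).choose))))
      (fun s => (hcon s).choose_spec)
      (fun a b h => by
        simp only [Sum.inr.injEq, Prod.mk.injEq] at h
        exact h.1)
    simp only [Fintype.card_fin] at hcard
    omega
  -- the accumulated error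
  set F : ℕ → Fin n → ZMod 2 := fun s a =>
    e (Sum.inl a) + ∑ t : Fin (dT - 1),
      if (t : ℕ) < s then e (Sum.inr (Sum.inl (t, Sum.inl a))) else 0 with hF
  have main : ∀ s : ℕ, ∀ hs : s < dT,
      (∀ z, HZ.mulVec (F s) z
        = e (Sum.inr (Sum.inr (Sum.inr ((⟨s, hs⟩ : Fin dT), Sum.inl z))))) ∧
      (∀ i, (α * JZ).mulVec (F s) i
        + (α * JZ * R).mulVec
          (fun g => e (Sum.inr (Sum.inr (Sum.inr ((⟨s, hs⟩ : Fin dT), Sum.inr g))))) i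
        = ψ i) := by
    intro s
    induction s with
    | zero =>
      intro hs
      have hF0 : F 0 = fun a => e (Sum.inl a) := by
        funext a; simp [hF]
      constructor
      · intro z
        have h := congrFun he1 (Sum.inl z)
        rw [HstZ_row1 HZ (HbarZ HZ S HG) e hs z] at h
        rw [hF0]
        exact lem1 _ _ h
      · intro i
        have h := congrFun he2 i
        rw [JstOC_row (α * JZ) (α * JZ * R) e hs i] at h
        rw [hF0]
        exact h
    | succ s IH =>
      intro hs
      have hs' : s < dT := by omega
      have hsd : s < dT - 1 := by omega
      obtain ⟨IH1, IH2⟩ := IH hs'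
      have hstep : F (s + 1) = fun a =>
          F s a + e (Sum.inr (Sum.inl ((⟨s, hsd⟩ : Fin (dT - 1)), Sum.inl a))) := by
        funext a
        simp only [hF]
        rw [add_assoc]
        congr 1
        have hsplit : ∀ t : Fin (dT - 1),
            (if (t : ℕ) < s + 1 then e (Sum.inr (Sum.inl (t, Sum.inl a))) else 0)
            = (if (t : ℕ) < s then e (Sum.inr (Sum.inl (t, Sum.inl a))) else 0)
              + (if (t : ℕ) = s then e (Sum.inr (Sum.inl (t, Sum.inl a))) else 0) := by
          intro t
          rw [← ite_or_add (by omega)]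
          exact if_congr (by omega) rfl rfl
        simp only [hsplit]
        rw [Finset.sum_add_distrib, sum_ite_val hsd]
      constructor
      · intro z
        have h := congrFun he1 (Sum.inr (Sum.inl ((⟨s, hsd⟩ : Fin (dT - 1)), Sum.inl z)))
        rw [HstZ_row2 HZ (HbarZ HZ S HG) e ⟨s, hsd⟩ hs' hs (Sum.inl z),
          HbarZ_mulVec_inl] at h
        rw [hstep, mulVec_add_apply]
        exact lem2 _ _ _ _ (IH1 z) h
      · intro i
        have hNs1 : (α * JZ * R).mulVec
            (fun g => e (Sum.inr (Sum.inr (Sum.inr ((⟨s + 1, hs⟩ : Fin dT), Sum.inr g))))) i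
            + (α * JZ).mulVec
              (fun a => e (Sum.inr (Sum.inl ((⟨s, hsd⟩ : Fin (dT - 1)), Sum.inl a)))) i
            + (α * JZ * R).mulVec
              (fun g => e (Sum.inr (Sum.inr (Sum.inr ((⟨s, hs'⟩ : Fin dT), Sum.inr g))))) i
            = 0 := by
          have hvec : (fun g => e (Sum.inr (Sum.inr (Sum.inr ((⟨s + 1, hs⟩ : Fin dT), Sum.inr g)))))
              = fun g =>
                S.mulVec (fun a => e (Sum.inr (Sum.inl ((⟨s, hsd⟩ : Fin (dT - 1)), Sum.inl a)))) g
                + (HGᵀ.mulVec (fun c => e (Sum.inr (Sum.inl ((⟨s, hsd⟩ : Fin (dT - 1)), Sum.inr c)))) g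
                  + e (Sum.inr (Sum.inr (Sum.inr ((⟨s, hs'⟩ : Fin dT), Sum.inr g))))) := by
            funext g
            have h := congrFun he1 (Sum.inr (Sum.inl ((⟨s, hsd⟩ : Fin (dT - 1)), Sum.inr g)))
            rw [HstZ_row2 HZ (HbarZ HZ S HG) e ⟨s, hsd⟩ hs' hs (Sum.inr g),
              HbarZ_mulVec_inr] at h
            have lemv : ∀ x y u v : ZMod 2, ((x + y) + u) + v = 0 → v = x + (y + u) := by decide
            exact lemv _ _ _ _ h
          rw [hvec]
          rw [mulVec_add_apply, mulVec_add_apply]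
          have e1 : (α * JZ * R).mulVec (S.mulVec
              (fun a => e (Sum.inr (Sum.inl ((⟨s, hsd⟩ : Fin (dT - 1)), Sum.inl a))))) i
              = (α * JZ).mulVec
                (fun a => e (Sum.inr (Sum.inl ((⟨s, hsd⟩ : Fin (dT - 1)), Sum.inl a)))) i := by
            rw [Matrix.mulVec_mulVec, hs3a]
          have e2 : (α * JZ * R).mulVec (HGᵀ.mulVec
              (fun c => e (Sum.inr (Sum.inl ((⟨s, hsd⟩ : Fin (dT - 1)), Sum.inr c))))) i = 0 := by
            rw [Matrix.mulVec_mulVec, hNH, Matrix.zero_mulVec]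
            rfl
          rw [e1, e2]
          have lemz : ∀ x y : ZMod 2, (x + (0 + y)) + x + y = 0 := by decide
          exact lemz _ _
        rw [hstep, mulVec_add_apply]
        exact lem3 _ _ _ _ _ (IH2 i) hNs1
  obtain ⟨h1, h2⟩ := main (s0 : ℕ) s0.isLt
  have hHZ0 : HZ.mulVec (F (s0 : ℕ)) = 0 := by
    funext z
    rw [h1 z]
    exact hm0 (Sum.inl z)
  have hJ0 : (α * JZ).mulVec (F (s0 : ℕ)) = ψ := by
    funext i
    have h := h2 i
    have hz : (fun g => e (Sum.inr (Sum.inr (Sum.inr ((⟨(s0 : ℕ), s0.isLt⟩ : Fin dT), Sum.inr g)))))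
        = (0 : Fin nG → ZMod 2) := funext fun g => hm0 (Sum.inr g)
    rw [hz, Matrix.mulVec_zero] at h
    simpa using h
  -- weight bound
  have hwt : hammingNorm (F (s0 : ℕ)) ≤ hammingNorm e := by
    apply weight_transfer e (fun a => Sum.inl a)
      (fun t a => Sum.inr (Sum.inl (t, Sum.inl a)))
      (fun a b h => by simpa using h)
      (fun t a t' b h => by
        simp only [Sum.inr.injEq, Sum.inl.injEq, Prod.mk.injEq] at h
        exact h.2)
      (fun t a b h => by simp at h)
    intro a ha
    by_cases h0 : e (Sum.inl a) ≠ 0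
    · exact Or.inl h0
    · push_neg at h0
      right
      by_contra hno
      push_neg at hno
      apply ha
      simp only [hF, h0, zero_add]
      exact Finset.sum_eq_zero fun t _ => by
        by_cases hts : (t : ℕ) < (s0 : ℕ) <;> simp [hts, hno t]
  refine le_trans (hdist ψ) (le_trans (sInf_le ⟨F (s0 : ℕ), hHZ0, hJ0, rfl⟩) ?_)
  exact Nat.cast_le.mpr hwt

/-- effective independence of measurement-outcome errors on injected magic
states. -/
theorem effective_independence_oc
    {n k q rX rZ rG rM nG : ℕ}
    (HX : Matrix (Fin rX) (Fin n) (ZMod 2)) (HZ : Matrix (Fin rZ) (Fin n) (ZMod 2))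
    (JX JZ : Matrix (Fin k) (Fin n) (ZMod 2))
    (hHXHZ : HX * HZᵀ = 0) (hHXJZ : HX * JZᵀ = 0) (hHZJX : HZ * JXᵀ = 0)
    (hJXJZ : JX * JZᵀ = 1)
    (hq1 : 1 ≤ q) (hqk : q ≤ k)
    (α : Matrix (Fin q) (Fin k) (ZMod 2))
    (αperp : Matrix (Fin (k - q)) (Fin k) (ZMod 2)) (hperp : αperp * αᵀ = 0)
    (αperpR : Matrix (Fin k) (Fin (k - q)) (ZMod 2)) (hrinv : αperp * αperpR = 1)
    (S : Matrix (Fin nG) (Fin n) (ZMod 2)) (T : Matrix (Fin rX) (Fin rG) (ZMod 2))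
    (HG : Matrix (Fin rG) (Fin nG) (ZMod 2)) (HM : Matrix (Fin rM) (Fin rG) (ZMod 2))
    (R : Matrix (Fin n) (Fin nG) (ZMod 2)) (β : Matrix (Fin (k - q)) (Fin rG) (ZMod 2))
    (hs1 : HX * Sᵀ = T * HG) (hs2 : HM * HG = 0)
    (hs3a : α * JZ * R * S = α * JZ) (hs3b : HG * (α * JZ * R)ᵀ = 0)
    (hs4 : αperp * JX * Sᵀ = β * HG)
    (dT : ℕ) (hdT : 2 ≤ dT)
    (δ w : ℕ) (hδ : 0 < δ) (hwpos : 0 < w) (hδdT : δ ≤ dT)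
    (hdist : ∀ ψ : Fin q → ZMod 2,
      min ((hammingNorm ψ * w : ℕ) : ℕ∞) (δ : ℕ∞) ≤ ewDist HZ (α * JZ) ψ) :
    ∀ ψ : Fin q → ZMod 2,
      min ((hammingNorm ψ * w : ℕ) : ℕ∞) (δ : ℕ∞) ≤
        ewDist (HstZ dT HZ (HbarZ HZ S HG)) (JstOC dT (α * JZ) (α * JZ * R)) ψ :=
  effective_independence_oc' HZ JZ α S HG R hs3a hs3b dT hdT δ w hδ hδdT hdist
end

section
/- (Key cleaning step in the deformed-code X-distance bound.) Assume the CSS code, the code-surgery datum, and that the pair (H_G, H_M) is (d_R, S)-bounded for a positive integer d_R. Let u ∈ F₂^{n} and v ∈ F₂^{r_G} satisfy H_X uᵀ = T vᵀ, H_M vᵀ = 0 and |v| < d_R. Then there exists w ∈ F₂^{n} such that H_X wᵀ = 0, α_⊥ J_X wᵀ = α_⊥ J_X uᵀ + β vᵀ, and |w| ≤ |u| + |v|. -/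
open Matrix

/-- key cleaning step in the deformed-code X-distance bound. -/
theorem cleaning_step
    {n k q rX rZ rG rM nG : ℕ}
    (HX : Matrix (Fin rX) (Fin n) (ZMod 2)) (HZ : Matrix (Fin rZ) (Fin n) (ZMod 2))
    (JX JZ : Matrix (Fin k) (Fin n) (ZMod 2))
    (hHXHZ : HX * HZᵀ = 0) (hHXJZ : HX * JZᵀ = 0) (hHZJX : HZ * JXᵀ = 0)
    (hJXJZ : JX * JZᵀ = 1)
    (hq1 : 1 ≤ q) (hqk : q ≤ k)
    (α : Matrix (Fin q) (Fin k) (ZMod 2))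
    (αperp : Matrix (Fin (k - q)) (Fin k) (ZMod 2)) (hperp : αperp * αᵀ = 0)
    (αperpR : Matrix (Fin k) (Fin (k - q)) (ZMod 2)) (hrinv : αperp * αperpR = 1)
    (S : Matrix (Fin nG) (Fin n) (ZMod 2)) (T : Matrix (Fin rX) (Fin rG) (ZMod 2))
    (HG : Matrix (Fin rG) (Fin nG) (ZMod 2)) (HM : Matrix (Fin rM) (Fin rG) (ZMod 2))
    (R : Matrix (Fin n) (Fin nG) (ZMod 2)) (β : Matrix (Fin (k - q)) (Fin rG) (ZMod 2))
    (hs1 : HX * Sᵀ = T * HG) (hs2 : HM * HG = 0)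
    (hs3a : α * JZ * R * S = α * JZ) (hs3b : HG * (α * JZ * R)ᵀ = 0)
    (hs4 : αperp * JX * Sᵀ = β * HG)
    (dR : ℕ) (hdRpos : 0 < dR) (hbound : BoundedPair HG HM S dR)
    (u : Fin n → ZMod 2) (v : Fin rG → ZMod 2)
    (hu : HX.mulVec u = T.mulVec v) (hv : HM.mulVec v = 0) (hvlt : hammingNorm v < dR) :
    ∃ w : Fin n → ZMod 2, HX.mulVec w = 0 ∧
      (αperp * JX).mulVec w = (αperp * JX).mulVec u + β.mulVec v ∧
      hammingNorm w ≤ hammingNorm u + hammingNorm v := by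

  obtain ⟨us, hvs, hws⟩ := hbound v hv hvlt
  refine ⟨u + Sᵀ.mulVec us, ?_, ?_, ?_⟩
  · rw [Matrix.mulVec_add, Matrix.mulVec_mulVec, hs1, hu, ← Matrix.mulVec_mulVec, ← hvs]
    funext i
    simp [CharTwo.add_self_eq_zero]
  · rw [Matrix.mulVec_add, Matrix.mulVec_mulVec]
    rw [hs4]
    have h2 : (β * HG).mulVec us = β.mulVec v := by
      rw [← Matrix.mulVec_mulVec, ← hvs]
    rw [h2]
  · calc hammingNorm (u + Sᵀ.mulVec us)
        = hammingDist (u + Sᵀ.mulVec us) 0 := (hammingDist_zero_right _).symm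
      _ ≤ hammingDist (u + Sᵀ.mulVec us) (Sᵀ.mulVec us) + hammingDist (Sᵀ.mulVec us) 0 :=
          hammingDist_triangle _ _ _
      _ = hammingNorm u + hammingNorm (Sᵀ.mulVec us) := by
          rw [hammingDist_zero_right, hammingDist_eq_hammingNorm]; congr 1; rw [show -(u + Sᵀ.mulVec us) + Sᵀ.mulVec us = u by funext i; simp [CharTwo.neg_eq, add_right_comm _ (u i), CharTwo.add_self_eq_zero]]
      _ ≤ hammingNorm u + hammingNorm v := by
          rw [Matrix.mulVec_transpose]; exact Nat.add_le_add_left hws _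
end
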